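/- arXiv:math/0604385 — 8 statements merged into one kernel-verified Lean document; each statement's English description precedes it below -/
import Mathlib

section
/- There is no elliptic curve over ℚ (i.e., Weierstrass equation Y² + a₁XY + a₃Y = X³ + a₂X² + a₄X + a₆ with a₁,…,a₆ ∈ ℚ and nonzero discriminant) possessing a simultaneous arithmetic progression of length 7. That is, there do not exist rational numbers a₁, a₂, a₃, a₄, a₆ (with nonzero discriminant), x₀, d ≠ 0, b, e, rational points P₀,…,P₆ on the curve with Pᵢ = (x₀ + i·d, yᵢ), and a permutation σ of {0,…,6} such that yᵢ = b + σ(i)·e for all i. -/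
set_option maxRecDepth 100000
set_option maxHeartbeats 4000000
set_option synthInstance.maxSize 1000000
set_option synthInstance.maxHeartbeats 1000000

set_option maxHeartbeats 2000000 in
def PzN (a0 a1 a2 a3 a4 a5 a6 : ℕ) : Prop :=
  (2*a4*a5^2*a6 + 8*a3*a5*a6^2 + 20*a3*a4*a5^2 + 30*a3*a4^2*a6 + 4*a3^2*a5*a6 + 20*a3^2*a4*a5 + 24*a2*a5^2*a6 + 40*a2*a4*a6^2 + 135*a2*a4^2*a5 + 60*a2*a3*a5^2 + 80*a2*a3^2*a6 + 100*a2*a3^2*a4 + 40*a2^2*a4*a6 + 120*a2^2*a3*a5 + 16*a1*a5*a6^2 + 108*a1*a4*a5^2 + 75*a1*a4^2*a6 + 40*a1*a3*a6^2 + 120*a1*a3*a4^2 + 256*a1*a3^2*a5 + 36*a1*a2*a5^2 + 20*a1*a2*a3^2 + 50*a1*a2^2*a6 + 135*a1*a2^2*a4 + 4*a1^2*a5*a6 + 36*a1^2*a4*a5 + 60*a1^2*a3*a6 + 60*a1^2*a3*a4 + 108*a1^2*a2*a5 + 20*a1^2*a2*a3 + 6*a0*a5^2*a6 + 16*a0*a4*a6^2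 + 50*a0*a4^2*a5 + 60*a0*a3*a5^2 + 36*a0*a3^2*a6 + 80*a0*a3^2*a4 + 8*a0*a2*a6^2 + 40*a0*a2*a4^2 + 75*a0*a2^2*a5 + 30*a0*a2^2*a3 + 4*a0*a1*a5^2 + 4*a0*a1*a3^2 + 6*a0*a1^2*a6 + 24*a0*a1^2*a4 + 2*a0*a1^2*a2 + 8*a0^2*a4*a6 + 40*a0^2*a3*a5 + 16*a0^2*a2*a6 + 40*a0^2*a2*a4 + 16*a0^2*a1*a5 + 8*a0^2*a1*a3) ≠ (a4*a5*a6^2 + a4^2*a5*a6 + 12*a3*a5^2*a6 + 10*a3*a4*a6^2 + 40*a3*a4^2*a5 + 20*a3^2*a4*a6 + 18*a2*a5*a6^2 + 90*a2*a4*a5^2 + 80*a2*a4^2*a6 + 20*a2*a3*a6^2 + 50*a2*a3*a4^2 + 180*a2*a3^2*a5 + 6*a2^2*a5*a6 + 45*a2^2*a4*a5 + 60*a2^2*a3*a6 + 50*a2^2*a3*a4 + 20*a1*a5^2*a6 + 45*a1*a4*a6^2 + 144*a1*a4^2*a5 + 128*a1*a3*a5^2 + 100*a1*a3^2*a6 +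 180*a1*a3^2*a4 + 10*a1*a2*a6^2 + 45*a1*a2*a4^2 + 144*a1*a2^2*a5 + 40*a1*a2^2*a3 + 30*a1^2*a4*a6 + 128*a1^2*a3*a5 + 40*a1^2*a2*a6 + 90*a1^2*a2*a4 + 5*a0*a5*a6^2 + 40*a0*a4*a5^2 + 24*a0*a4^2*a6 + 18*a0*a3*a6^2 + 60*a0*a3*a4^2 + 100*a0*a3^2*a5 + 30*a0*a2*a5^2 + 20*a0*a2*a3^2 + 24*a0*a2^2*a6 + 80*a0*a2^2*a4 + a0*a1*a6^2 + 6*a0*a1*a4^2 + a0*a1*a2^2 + 20*a0*a1^2*a5 + 12*a0*a1^2*a3 + a0^2*a5*a6 + 10*a0^2*a4*a5 + 18*a0^2*a3*a6 + 20*a0^2*a3*a4 + 45*a0^2*a2*a5 + 10*a0^2*a2*a3 + 5*a0^2*a1*a6 + 18*a0^2*a1*a4 + a0^2*a1*a2) ∨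
  ((2*a4*a6 + 24*a3*a5 + 24*a2*a6 + 30*a2*a4 + 48*a1*a5 + 6*a1*a2 + 6*a0*a6 + 8*a0*a4 + 6*a0*a3 + a0*a1) ≠ (3*a4*a5 + 12*a3*a6 + 10*a3*a4 + 54*a2*a5 + 20*a1*a6 + 27*a1*a4 + 8*a1*a3 + 15*a0*a5 + 6*a0*a2) ∧ (a3*a4*a6^2 + 6*a3*a4^2*a5 + 2*a3^2*a4*a6 + 18*a2*a4*a5^2 + 12*a2*a4^2*a6 + 6*a2*a3*a6^2 + 15*a2*a3*a4^2 + 54*a2*a3^2*a5 + 9*a2^2*a4*a5 + 18*a2^2*a3*a6 + 15*a2^2*a3*a4 + 9*a1*a4*a6^2 + 36*a1*a4^2*a5 + 48*a1*a3*a5^2 + 40*a1*a3^2*a6 + 63*a1*a3^2*a4 + 6*a1*a2*a6^2 + 18*a1*a2*a4^2 + 72*a1*a2^2*a5 + 12*a1*a2^2*a3 + 6*a1^2*a4*a6 + 48*a1^2*a3*a5 + 24*a1^2*a2*a6 + 36*a1^2*a2*a4 + 12*a0*a4*a5^2 + 6*a0*a4^2*a6 + 9*a0*a3*a6^2 + 24*a0*a3*a4^2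 + 45*a0*a3^2*a5 + 18*a0*a2*a5^2 + 6*a0*a2*a3^2 + 18*a0*a2^2*a6 + 36*a0*a2^2*a4 + a0*a1*a6^2 + 3*a0*a1*a4^2 + 15*a0*a1^2*a5 + 3*a0*a1^2*a3 + 3*a0^2*a4*a5 + 9*a0^2*a3*a6 + 8*a0^2*a3*a4 + 27*a0^2*a2*a5 + 3*a0^2*a2*a3 + 5*a0^2*a1*a6 + 9*a0^2*a1*a4) = (3*a3*a4*a5^2 + 3*a3*a4^2*a6 + 3*a3^2*a4*a5 + 6*a2*a4*a6^2 + 27*a2*a4^2*a5 + 18*a2*a3*a5^2 + 24*a2*a3^2*a6 + 30*a2*a3^2*a4 + 6*a2^2*a4*a6 + 36*a2^2*a3*a5 + 27*a1*a4*a5^2 + 15*a1*a4^2*a6 + 16*a1*a3*a6^2 + 42*a1*a3*a4^2 + 96*a1*a3^2*a5 + 18*a1*a2*a5^2 + 6*a1*a2*a3^2 + 30*a1*a2^2*a6 + 54*a1*a2^2*a4 + 9*a1^2*a4*a5 + 24*a1^2*a3*a6 + 21*a1^2*a3*a4 + 54*a1^2*a2*a5 + 6*a1^2*a2*a3 + 4*a0*a4*a6^2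 + 15*a0*a4^2*a5 + 27*a0*a3*a5^2 + 18*a0*a3^2*a6 + 32*a0*a3^2*a4 + 6*a0*a2*a6^2 + 18*a0*a2*a4^2 + 45*a0*a2^2*a5 + 9*a0*a2^2*a3 + 3*a0*a1*a5^2 + a0*a1*a3^2 + 6*a0*a1^2*a6 + 12*a0*a1^2*a4 + 2*a0^2*a4*a6 + 18*a0^2*a3*a5 + 12*a0^2*a2*a6 + 18*a0^2*a2*a4 + 12*a0^2*a1*a5 + 2*a0^2*a1*a3)) ∨
  ((a4 + 3*a2) = (3*a3 + a1) ∧ (a4^2 + 3*a2^2) = (3*a3^2 + a1^2) ∧ (4*a4 + 6*a2) = (9*a3 + a1)) ∨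
  ((6*a5^2*a6 + 16*a4*a6^2 + 50*a4^2*a5 + 60*a3*a5^2 + 36*a3^2*a6 + 80*a3^2*a4 + 8*a2*a6^2 + 40*a2*a4^2 + 75*a2^2*a5 + 30*a2^2*a3 + 4*a1*a5^2 + 4*a1*a3^2 + 6*a1^2*a6 + 24*a1^2*a4 + 2*a1^2*a2) ≠ (5*a5*a6^2 + 40*a4*a5^2 + 24*a4^2*a6 + 18*a3*a6^2 + 60*a3*a4^2 + 100*a3^2*a5 + 30*a2*a5^2 + 20*a2*a3^2 + 24*a2^2*a6 + 80*a2^2*a4 + a1*a6^2 + 6*a1*a4^2 + a1*a2^2 + 20*a1^2*a5 + 12*a1^2*a3) ∧ (2*a4*a5^2*a6 + 6*a3*a5*a6^2 + 10*a3*a4*a5^2 + 18*a3*a4^2*a6 + 3*a3^2*a5*a6 + 10*a3^2*a4*a5 + 12*a2*a5^2*a6 + 16*a2*a4*a6^2 + 45*a2*a4^2*a5 + 15*a2*a3*a5^2 + 24*a2*a3^2*a6 + 20*a2*a3^2*a4 + 16*a2^2*a4*a6 + 30*a2^2*a3*a5 + 4*a1*a5*a6^2 + 18*a1*a4*a5^2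 + 15*a1*a4^2*a6 + 6*a1*a3*a6^2 + 12*a1*a3*a4^2 + 32*a1*a3^2*a5 + 3*a1*a2*a5^2 + a1*a2*a3^2 + 5*a1*a2^2*a6 + 9*a1*a2^2*a4 + a1^2*a5*a6 + 6*a1^2*a4*a5 + 9*a1^2*a3*a6 + 6*a1^2*a3*a4 + 9*a1^2*a2*a5 + a1^2*a2*a3) = (a4*a5*a6^2 + a4^2*a5*a6 + 9*a3*a5^2*a6 + 6*a3*a4*a6^2 + 20*a3*a4^2*a5 + 12*a3^2*a4*a6 + 9*a2*a5*a6^2 + 30*a2*a4*a5^2 + 32*a2*a4^2*a6 + 6*a2*a3*a6^2 + 10*a2*a3*a4^2 + 45*a2*a3^2*a5 + 3*a2^2*a5*a6 + 15*a2^2*a4*a5 + 18*a2^2*a3*a6 + 10*a2^2*a3*a4 + 5*a1*a5^2*a6 + 9*a1*a4*a6^2 + 24*a1*a4^2*a5 + 16*a1*a3*a5^2 + 15*a1*a3^2*a6 + 18*a1*a3^2*a4 + a1*a2*a6^2 + 3*a1*a2*a4^2 + 12*a1*a2^2*a5 + 2*a1*a2^2*a3 + 6*a1^2*a4*a6 +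 16*a1^2*a3*a5 + 4*a1^2*a2*a6 + 6*a1^2*a2*a4))

instance (a0 a1 a2 a3 a4 a5 a6 : ℕ) : Decidable (PzN a0 a1 a2 a3 a4 a5 a6) := by
  unfold PzN; infer_instance

def G6 (b0 b1 b2 b3 b4 b5 b6 : ℕ) : Prop := b6 ≠ b0 → b6 ≠ b1 → b6 ≠ b2 → b6 ≠ b3 → b6 ≠ b4 → b6 ≠ b5 → PzN b0 b1 b2 b3 b4 b5 b6
instance (b0 b1 b2 b3 b4 b5 b6 : ℕ) : Decidable (G6 b0 b1 b2 b3 b4 b5 b6) := by unfold G6; infer_instance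
def F6 (b0 b1 b2 b3 b4 b5 : ℕ) : Prop := ∀ b6 < 7, G6 b0 b1 b2 b3 b4 b5 b6
instance (b0 b1 b2 b3 b4 b5 : ℕ) : Decidable (F6 b0 b1 b2 b3 b4 b5) := by unfold F6; infer_instance

def G5 (b0 b1 b2 b3 b4 b5 : ℕ) : Prop := b5 ≠ b0 → b5 ≠ b1 → b5 ≠ b2 → b5 ≠ b3 → b5 ≠ b4 → F6 b0 b1 b2 b3 b4 b5
instance (b0 b1 b2 b3 b4 b5 : ℕ) : Decidable (G5 b0 b1 b2 b3 b4 b5) := by unfold G5; infer_instance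
def F5 (b0 b1 b2 b3 b4 : ℕ) : Prop := ∀ b5 < 7, G5 b0 b1 b2 b3 b4 b5
instance (b0 b1 b2 b3 b4 : ℕ) : Decidable (F5 b0 b1 b2 b3 b4) := by unfold F5; infer_instance

def G4 (b0 b1 b2 b3 b4 : ℕ) : Prop := b4 ≠ b0 → b4 ≠ b1 → b4 ≠ b2 → b4 ≠ b3 → F5 b0 b1 b2 b3 b4
instance (b0 b1 b2 b3 b4 : ℕ) : Decidable (G4 b0 b1 b2 b3 b4) := by unfold G4; infer_instance
def F4 (b0 b1 b2 b3 : ℕ) : Prop := ∀ b4 < 7, G4 b0 b1 b2 b3 b4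
instance (b0 b1 b2 b3 : ℕ) : Decidable (F4 b0 b1 b2 b3) := by unfold F4; infer_instance

def G3 (b0 b1 b2 b3 : ℕ) : Prop := b3 ≠ b0 → b3 ≠ b1 → b3 ≠ b2 → F4 b0 b1 b2 b3
instance (b0 b1 b2 b3 : ℕ) : Decidable (G3 b0 b1 b2 b3) := by unfold G3; infer_instance
def F3 (b0 b1 b2 : ℕ) : Prop := ∀ b3 < 7, G3 b0 b1 b2 b3
instance (b0 b1 b2 : ℕ) : Decidable (F3 b0 b1 b2) := by unfold F3; infer_instance

def G2 (b0 b1 b2 : ℕ) : Prop := b2 ≠ b0 → b2 ≠ b1 → F3 b0 b1 b2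
instance (b0 b1 b2 : ℕ) : Decidable (G2 b0 b1 b2) := by unfold G2; infer_instance
def F2 (b0 b1 : ℕ) : Prop := ∀ b2 < 7, G2 b0 b1 b2
instance (b0 b1 : ℕ) : Decidable (F2 b0 b1) := by unfold F2; infer_instance

def G1 (b0 b1 : ℕ) : Prop := b1 ≠ b0 → F2 b0 b1
instance (b0 b1 : ℕ) : Decidable (G1 b0 b1) := by unfold G1; infer_instance
def F1 (b0 : ℕ) : Prop := ∀ b1 < 7, G1 b0 b1
instance (b0 : ℕ) : Decidable (F1 b0) := by unfold F1; infer_instance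

set_option maxRecDepth 40000 in
lemma perm_check : ∀ b0 < 7, F1 b0 := by decide

lemma key (A B C e0 e1 e2 e3 : ℚ) (a0 a1 a2 a3 a4 a5 a6 : ℕ)
    (hP : PzN a0 a1 a2 a3 a4 a5 a6)
    (h0 : A*(a0:ℚ)^2 + B*(a0:ℚ) + C*(0*(a0:ℚ)) + e0 + e1*0 + e2*0^2 + e3*0^3 = 0)
    (h1 : A*(a1:ℚ)^2 + B*(a1:ℚ) + C*(1*(a1:ℚ)) + e0 + e1*1 + e2*1^2 + e3*1^3 = 0)
    (h2 : A*(a2:ℚ)^2 + B*(a2:ℚ) + C*(2*(a2:ℚ)) + e0 + e1*2 + e2*2^2 + e3*2^3 = 0)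
    (h3 : A*(a3:ℚ)^2 + B*(a3:ℚ) + C*(3*(a3:ℚ)) + e0 + e1*3 + e2*3^2 + e3*3^3 = 0)
    (h4 : A*(a4:ℚ)^2 + B*(a4:ℚ) + C*(4*(a4:ℚ)) + e0 + e1*4 + e2*4^2 + e3*4^3 = 0)
    (h5 : A*(a5:ℚ)^2 + B*(a5:ℚ) + C*(5*(a5:ℚ)) + e0 + e1*5 + e2*5^2 + e3*5^3 = 0)
    (h6 : A*(a6:ℚ)^2 + B*(a6:ℚ) + C*(6*(a6:ℚ)) + e0 + e1*6 + e2*6^2 + e3*6^3 = 0)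
    : e3 = 0 := by
  have H0 : A*((a3:ℚ)^2 - 3*(a2:ℚ)^2 + 3*(a1:ℚ)^2 - (a0:ℚ)^2) + B*((a3:ℚ) - 3*(a2:ℚ) + 3*(a1:ℚ) - (a0:ℚ)) + C*(3*(a3:ℚ) - 6*(a2:ℚ) + 3*(a1:ℚ) - 0*(a0:ℚ)) + 6*e3 = 0 := by
    linear_combination h3 - 3*h2 + 3*h1 - h0
  have H1 : A*((a4:ℚ)^2 - 3*(a3:ℚ)^2 + 3*(a2:ℚ)^2 - (a1:ℚ)^2) + B*((a4:ℚ) - 3*(a3:ℚ) + 3*(a2:ℚ) - (a1:ℚ)) + C*(4*(a4:ℚ) - 9*(a3:ℚ) + 6*(a2:ℚ) - 1*(a1:ℚ)) + 6*e3 = 0 := by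
    linear_combination h4 - 3*h3 + 3*h2 - h1
  have H2 : A*((a5:ℚ)^2 - 3*(a4:ℚ)^2 + 3*(a3:ℚ)^2 - (a2:ℚ)^2) + B*((a5:ℚ) - 3*(a4:ℚ) + 3*(a3:ℚ) - (a2:ℚ)) + C*(5*(a5:ℚ) - 12*(a4:ℚ) + 9*(a3:ℚ) - 2*(a2:ℚ)) + 6*e3 = 0 := by
    linear_combination h5 - 3*h4 + 3*h3 - h2
  have H3 : A*((a6:ℚ)^2 - 3*(a5:ℚ)^2 + 3*(a4:ℚ)^2 - (a3:ℚ)^2) + B*((a6:ℚ) - 3*(a5:ℚ) + 3*(a4:ℚ) - (a3:ℚ)) + C*(6*(a6:ℚ) - 15*(a5:ℚ) + 12*(a4:ℚ) - 3*(a3:ℚ)) + 6*e3 = 0 := by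
    linear_combination h6 - 3*h5 + 3*h4 - h3
  rcases hP with hD | ⟨hX, hY⟩ | ⟨hp1, hq1, hr1⟩ | ⟨hX, hY⟩
  · have hD' : (2*(a4:ℚ)*(a5:ℚ)^2*(a6:ℚ) + 8*(a3:ℚ)*(a5:ℚ)*(a6:ℚ)^2 + 20*(a3:ℚ)*(a4:ℚ)*(a5:ℚ)^2 + 30*(a3:ℚ)*(a4:ℚ)^2*(a6:ℚ) + 4*(a3:ℚ)^2*(a5:ℚ)*(a6:ℚ) + 20*(a3:ℚ)^2*(a4:ℚ)*(a5:ℚ) + 24*(a2:ℚ)*(a5:ℚ)^2*(a6:ℚ) + 40*(a2:ℚ)*(a4:ℚ)*(a6:ℚ)^2 + 135*(a2:ℚ)*(a4:ℚ)^2*(a5:ℚ) + 60*(a2:ℚ)*(a3:ℚ)*(a5:ℚ)^2 + 80*(a2:ℚ)*(a3:ℚ)^2*(a6:ℚ) + 100*(a2:ℚ)*(a3:ℚ)^2*(a4:ℚ) + 40*(a2:ℚ)^2*(a4:ℚ)*(a6:ℚ) + 120*(a2:ℚ)^2*(a3:ℚ)*(a5:ℚ) + 16*(a1:ℚ)*(a5:ℚ)*(a6:ℚ)^2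 + 108*(a1:ℚ)*(a4:ℚ)*(a5:ℚ)^2 + 75*(a1:ℚ)*(a4:ℚ)^2*(a6:ℚ) + 40*(a1:ℚ)*(a3:ℚ)*(a6:ℚ)^2 + 120*(a1:ℚ)*(a3:ℚ)*(a4:ℚ)^2 + 256*(a1:ℚ)*(a3:ℚ)^2*(a5:ℚ) + 36*(a1:ℚ)*(a2:ℚ)*(a5:ℚ)^2 + 20*(a1:ℚ)*(a2:ℚ)*(a3:ℚ)^2 + 50*(a1:ℚ)*(a2:ℚ)^2*(a6:ℚ) + 135*(a1:ℚ)*(a2:ℚ)^2*(a4:ℚ) + 4*(a1:ℚ)^2*(a5:ℚ)*(a6:ℚ) + 36*(a1:ℚ)^2*(a4:ℚ)*(a5:ℚ) + 60*(a1:ℚ)^2*(a3:ℚ)*(a6:ℚ) + 60*(a1:ℚ)^2*(a3:ℚ)*(a4:ℚ) + 108*(a1:ℚ)^2*(a2:ℚ)*(a5:ℚ) + 20*(a1:ℚ)^2*(a2:ℚ)*(a3:ℚ) + 6*(a0:ℚ)*(a5:ℚ)^2*(a6:ℚ) + 16*(a0:ℚ)*(a4:ℚ)*(a6:ℚ)^2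 + 50*(a0:ℚ)*(a4:ℚ)^2*(a5:ℚ) + 60*(a0:ℚ)*(a3:ℚ)*(a5:ℚ)^2 + 36*(a0:ℚ)*(a3:ℚ)^2*(a6:ℚ) + 80*(a0:ℚ)*(a3:ℚ)^2*(a4:ℚ) + 8*(a0:ℚ)*(a2:ℚ)*(a6:ℚ)^2 + 40*(a0:ℚ)*(a2:ℚ)*(a4:ℚ)^2 + 75*(a0:ℚ)*(a2:ℚ)^2*(a5:ℚ) + 30*(a0:ℚ)*(a2:ℚ)^2*(a3:ℚ) + 4*(a0:ℚ)*(a1:ℚ)*(a5:ℚ)^2 + 4*(a0:ℚ)*(a1:ℚ)*(a3:ℚ)^2 + 6*(a0:ℚ)*(a1:ℚ)^2*(a6:ℚ) + 24*(a0:ℚ)*(a1:ℚ)^2*(a4:ℚ) + 2*(a0:ℚ)*(a1:ℚ)^2*(a2:ℚ) + 8*(a0:ℚ)^2*(a4:ℚ)*(a6:ℚ) + 40*(a0:ℚ)^2*(a3:ℚ)*(a5:ℚ) + 16*(a0:ℚ)^2*(a2:ℚ)*(a6:ℚ) + 40*(a0:ℚ)^2*(a2:ℚ)*(a4:ℚ)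 + 16*(a0:ℚ)^2*(a1:ℚ)*(a5:ℚ) + 8*(a0:ℚ)^2*(a1:ℚ)*(a3:ℚ)) - ((a4:ℚ)*(a5:ℚ)*(a6:ℚ)^2 + (a4:ℚ)^2*(a5:ℚ)*(a6:ℚ) + 12*(a3:ℚ)*(a5:ℚ)^2*(a6:ℚ) + 10*(a3:ℚ)*(a4:ℚ)*(a6:ℚ)^2 + 40*(a3:ℚ)*(a4:ℚ)^2*(a5:ℚ) + 20*(a3:ℚ)^2*(a4:ℚ)*(a6:ℚ) + 18*(a2:ℚ)*(a5:ℚ)*(a6:ℚ)^2 + 90*(a2:ℚ)*(a4:ℚ)*(a5:ℚ)^2 + 80*(a2:ℚ)*(a4:ℚ)^2*(a6:ℚ) + 20*(a2:ℚ)*(a3:ℚ)*(a6:ℚ)^2 + 50*(a2:ℚ)*(a3:ℚ)*(a4:ℚ)^2 + 180*(a2:ℚ)*(a3:ℚ)^2*(a5:ℚ) + 6*(a2:ℚ)^2*(a5:ℚ)*(a6:ℚ) + 45*(a2:ℚ)^2*(a4:ℚ)*(a5:ℚ) + 60*(a2:ℚ)^2*(a3:ℚ)*(a6:ℚ) + 50*(a2:ℚ)^2*(a3:ℚ)*(a4:ℚ)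 + 20*(a1:ℚ)*(a5:ℚ)^2*(a6:ℚ) + 45*(a1:ℚ)*(a4:ℚ)*(a6:ℚ)^2 + 144*(a1:ℚ)*(a4:ℚ)^2*(a5:ℚ) + 128*(a1:ℚ)*(a3:ℚ)*(a5:ℚ)^2 + 100*(a1:ℚ)*(a3:ℚ)^2*(a6:ℚ) + 180*(a1:ℚ)*(a3:ℚ)^2*(a4:ℚ) + 10*(a1:ℚ)*(a2:ℚ)*(a6:ℚ)^2 + 45*(a1:ℚ)*(a2:ℚ)*(a4:ℚ)^2 + 144*(a1:ℚ)*(a2:ℚ)^2*(a5:ℚ) + 40*(a1:ℚ)*(a2:ℚ)^2*(a3:ℚ) + 30*(a1:ℚ)^2*(a4:ℚ)*(a6:ℚ) + 128*(a1:ℚ)^2*(a3:ℚ)*(a5:ℚ) + 40*(a1:ℚ)^2*(a2:ℚ)*(a6:ℚ) + 90*(a1:ℚ)^2*(a2:ℚ)*(a4:ℚ) + 5*(a0:ℚ)*(a5:ℚ)*(a6:ℚ)^2 + 40*(a0:ℚ)*(a4:ℚ)*(a5:ℚ)^2 + 24*(a0:ℚ)*(a4:ℚ)^2*(a6:ℚ)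 + 18*(a0:ℚ)*(a3:ℚ)*(a6:ℚ)^2 + 60*(a0:ℚ)*(a3:ℚ)*(a4:ℚ)^2 + 100*(a0:ℚ)*(a3:ℚ)^2*(a5:ℚ) + 30*(a0:ℚ)*(a2:ℚ)*(a5:ℚ)^2 + 20*(a0:ℚ)*(a2:ℚ)*(a3:ℚ)^2 + 24*(a0:ℚ)*(a2:ℚ)^2*(a6:ℚ) + 80*(a0:ℚ)*(a2:ℚ)^2*(a4:ℚ) + (a0:ℚ)*(a1:ℚ)*(a6:ℚ)^2 + 6*(a0:ℚ)*(a1:ℚ)*(a4:ℚ)^2 + (a0:ℚ)*(a1:ℚ)*(a2:ℚ)^2 + 20*(a0:ℚ)*(a1:ℚ)^2*(a5:ℚ) + 12*(a0:ℚ)*(a1:ℚ)^2*(a3:ℚ) + (a0:ℚ)^2*(a5:ℚ)*(a6:ℚ) + 10*(a0:ℚ)^2*(a4:ℚ)*(a5:ℚ) + 18*(a0:ℚ)^2*(a3:ℚ)*(a6:ℚ) + 20*(a0:ℚ)^2*(a3:ℚ)*(a4:ℚ) + 45*(a0:ℚ)^2*(a2:ℚ)*(a5:ℚ) + 10*(a0:ℚ)^2*(a2:ℚ)*(a3:ℚ)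 + 5*(a0:ℚ)^2*(a1:ℚ)*(a6:ℚ) + 18*(a0:ℚ)^2*(a1:ℚ)*(a4:ℚ) + (a0:ℚ)^2*(a1:ℚ)*(a2:ℚ)) ≠ 0 := sub_ne_zero_of_ne (by exact_mod_cast hD)
    have hprod : (6*e3) * ((2*(a4:ℚ)*(a5:ℚ)^2*(a6:ℚ) + 8*(a3:ℚ)*(a5:ℚ)*(a6:ℚ)^2 + 20*(a3:ℚ)*(a4:ℚ)*(a5:ℚ)^2 + 30*(a3:ℚ)*(a4:ℚ)^2*(a6:ℚ) + 4*(a3:ℚ)^2*(a5:ℚ)*(a6:ℚ) + 20*(a3:ℚ)^2*(a4:ℚ)*(a5:ℚ) + 24*(a2:ℚ)*(a5:ℚ)^2*(a6:ℚ) + 40*(a2:ℚ)*(a4:ℚ)*(a6:ℚ)^2 + 135*(a2:ℚ)*(a4:ℚ)^2*(a5:ℚ) + 60*(a2:ℚ)*(a3:ℚ)*(a5:ℚ)^2 + 80*(a2:ℚ)*(a3:ℚ)^2*(a6:ℚ) + 100*(a2:ℚ)*(a3:ℚ)^2*(a4:ℚ) + 40*(a2:ℚ)^2*(a4:ℚ)*(a6:ℚ)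 + 120*(a2:ℚ)^2*(a3:ℚ)*(a5:ℚ) + 16*(a1:ℚ)*(a5:ℚ)*(a6:ℚ)^2 + 108*(a1:ℚ)*(a4:ℚ)*(a5:ℚ)^2 + 75*(a1:ℚ)*(a4:ℚ)^2*(a6:ℚ) + 40*(a1:ℚ)*(a3:ℚ)*(a6:ℚ)^2 + 120*(a1:ℚ)*(a3:ℚ)*(a4:ℚ)^2 + 256*(a1:ℚ)*(a3:ℚ)^2*(a5:ℚ) + 36*(a1:ℚ)*(a2:ℚ)*(a5:ℚ)^2 + 20*(a1:ℚ)*(a2:ℚ)*(a3:ℚ)^2 + 50*(a1:ℚ)*(a2:ℚ)^2*(a6:ℚ) + 135*(a1:ℚ)*(a2:ℚ)^2*(a4:ℚ) + 4*(a1:ℚ)^2*(a5:ℚ)*(a6:ℚ) + 36*(a1:ℚ)^2*(a4:ℚ)*(a5:ℚ) + 60*(a1:ℚ)^2*(a3:ℚ)*(a6:ℚ) + 60*(a1:ℚ)^2*(a3:ℚ)*(a4:ℚ) + 108*(a1:ℚ)^2*(a2:ℚ)*(a5:ℚ) + 20*(a1:ℚ)^2*(a2:ℚ)*(a3:ℚ)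 + 6*(a0:ℚ)*(a5:ℚ)^2*(a6:ℚ) + 16*(a0:ℚ)*(a4:ℚ)*(a6:ℚ)^2 + 50*(a0:ℚ)*(a4:ℚ)^2*(a5:ℚ) + 60*(a0:ℚ)*(a3:ℚ)*(a5:ℚ)^2 + 36*(a0:ℚ)*(a3:ℚ)^2*(a6:ℚ) + 80*(a0:ℚ)*(a3:ℚ)^2*(a4:ℚ) + 8*(a0:ℚ)*(a2:ℚ)*(a6:ℚ)^2 + 40*(a0:ℚ)*(a2:ℚ)*(a4:ℚ)^2 + 75*(a0:ℚ)*(a2:ℚ)^2*(a5:ℚ) + 30*(a0:ℚ)*(a2:ℚ)^2*(a3:ℚ) + 4*(a0:ℚ)*(a1:ℚ)*(a5:ℚ)^2 + 4*(a0:ℚ)*(a1:ℚ)*(a3:ℚ)^2 + 6*(a0:ℚ)*(a1:ℚ)^2*(a6:ℚ) + 24*(a0:ℚ)*(a1:ℚ)^2*(a4:ℚ) + 2*(a0:ℚ)*(a1:ℚ)^2*(a2:ℚ) + 8*(a0:ℚ)^2*(a4:ℚ)*(a6:ℚ) + 40*(a0:ℚ)^2*(a3:ℚ)*(a5:ℚ)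 + 16*(a0:ℚ)^2*(a2:ℚ)*(a6:ℚ) + 40*(a0:ℚ)^2*(a2:ℚ)*(a4:ℚ) + 16*(a0:ℚ)^2*(a1:ℚ)*(a5:ℚ) + 8*(a0:ℚ)^2*(a1:ℚ)*(a3:ℚ)) - ((a4:ℚ)*(a5:ℚ)*(a6:ℚ)^2 + (a4:ℚ)^2*(a5:ℚ)*(a6:ℚ) + 12*(a3:ℚ)*(a5:ℚ)^2*(a6:ℚ) + 10*(a3:ℚ)*(a4:ℚ)*(a6:ℚ)^2 + 40*(a3:ℚ)*(a4:ℚ)^2*(a5:ℚ) + 20*(a3:ℚ)^2*(a4:ℚ)*(a6:ℚ) + 18*(a2:ℚ)*(a5:ℚ)*(a6:ℚ)^2 + 90*(a2:ℚ)*(a4:ℚ)*(a5:ℚ)^2 + 80*(a2:ℚ)*(a4:ℚ)^2*(a6:ℚ) + 20*(a2:ℚ)*(a3:ℚ)*(a6:ℚ)^2 + 50*(a2:ℚ)*(a3:ℚ)*(a4:ℚ)^2 + 180*(a2:ℚ)*(a3:ℚ)^2*(a5:ℚ) + 6*(a2:ℚ)^2*(a5:ℚ)*(a6:ℚ) + 45*(a2:ℚ)^2*(a4:ℚ)*(a5:ℚ)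 + 60*(a2:ℚ)^2*(a3:ℚ)*(a6:ℚ) + 50*(a2:ℚ)^2*(a3:ℚ)*(a4:ℚ) + 20*(a1:ℚ)*(a5:ℚ)^2*(a6:ℚ) + 45*(a1:ℚ)*(a4:ℚ)*(a6:ℚ)^2 + 144*(a1:ℚ)*(a4:ℚ)^2*(a5:ℚ) + 128*(a1:ℚ)*(a3:ℚ)*(a5:ℚ)^2 + 100*(a1:ℚ)*(a3:ℚ)^2*(a6:ℚ) + 180*(a1:ℚ)*(a3:ℚ)^2*(a4:ℚ) + 10*(a1:ℚ)*(a2:ℚ)*(a6:ℚ)^2 + 45*(a1:ℚ)*(a2:ℚ)*(a4:ℚ)^2 + 144*(a1:ℚ)*(a2:ℚ)^2*(a5:ℚ) + 40*(a1:ℚ)*(a2:ℚ)^2*(a3:ℚ) + 30*(a1:ℚ)^2*(a4:ℚ)*(a6:ℚ) + 128*(a1:ℚ)^2*(a3:ℚ)*(a5:ℚ) + 40*(a1:ℚ)^2*(a2:ℚ)*(a6:ℚ) + 90*(a1:ℚ)^2*(a2:ℚ)*(a4:ℚ) + 5*(a0:ℚ)*(a5:ℚ)*(a6:ℚ)^2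 + 40*(a0:ℚ)*(a4:ℚ)*(a5:ℚ)^2 + 24*(a0:ℚ)*(a4:ℚ)^2*(a6:ℚ) + 18*(a0:ℚ)*(a3:ℚ)*(a6:ℚ)^2 + 60*(a0:ℚ)*(a3:ℚ)*(a4:ℚ)^2 + 100*(a0:ℚ)*(a3:ℚ)^2*(a5:ℚ) + 30*(a0:ℚ)*(a2:ℚ)*(a5:ℚ)^2 + 20*(a0:ℚ)*(a2:ℚ)*(a3:ℚ)^2 + 24*(a0:ℚ)*(a2:ℚ)^2*(a6:ℚ) + 80*(a0:ℚ)*(a2:ℚ)^2*(a4:ℚ) + (a0:ℚ)*(a1:ℚ)*(a6:ℚ)^2 + 6*(a0:ℚ)*(a1:ℚ)*(a4:ℚ)^2 + (a0:ℚ)*(a1:ℚ)*(a2:ℚ)^2 + 20*(a0:ℚ)*(a1:ℚ)^2*(a5:ℚ) + 12*(a0:ℚ)*(a1:ℚ)^2*(a3:ℚ) + (a0:ℚ)^2*(a5:ℚ)*(a6:ℚ) + 10*(a0:ℚ)^2*(a4:ℚ)*(a5:ℚ) + 18*(a0:ℚ)^2*(a3:ℚ)*(a6:ℚ) + 20*(a0:ℚ)^2*(a3:ℚ)*(a4:ℚ)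 + 45*(a0:ℚ)^2*(a2:ℚ)*(a5:ℚ) + 10*(a0:ℚ)^2*(a2:ℚ)*(a3:ℚ) + 5*(a0:ℚ)^2*(a1:ℚ)*(a6:ℚ) + 18*(a0:ℚ)^2*(a1:ℚ)*(a4:ℚ) + (a0:ℚ)^2*(a1:ℚ)*(a2:ℚ))) = 0 := by
      linear_combination - (((a4:ℚ)^2 - 3*(a3:ℚ)^2 + 3*(a2:ℚ)^2 - (a1:ℚ)^2)*(((a5:ℚ) - 3*(a4:ℚ) + 3*(a3:ℚ) - (a2:ℚ))*(6*(a6:ℚ) - 15*(a5:ℚ) + 12*(a4:ℚ) - 3*(a3:ℚ)) - ((a6:ℚ) - 3*(a5:ℚ) + 3*(a4:ℚ) - (a3:ℚ))*(5*(a5:ℚ) - 12*(a4:ℚ) + 9*(a3:ℚ) - 2*(a2:ℚ))) - ((a5:ℚ)^2 - 3*(a4:ℚ)^2 + 3*(a3:ℚ)^2 - (a2:ℚ)^2)*(((a4:ℚ) - 3*(a3:ℚ) + 3*(a2:ℚ) - (a1:ℚ))*(6*(a6:ℚ) - 15*(a5:ℚ) + 12*(a4:ℚ) - 3*(a3:ℚ))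 - ((a6:ℚ) - 3*(a5:ℚ) + 3*(a4:ℚ) - (a3:ℚ))*(4*(a4:ℚ) - 9*(a3:ℚ) + 6*(a2:ℚ) - 1*(a1:ℚ))) + ((a6:ℚ)^2 - 3*(a5:ℚ)^2 + 3*(a4:ℚ)^2 - (a3:ℚ)^2)*(((a4:ℚ) - 3*(a3:ℚ) + 3*(a2:ℚ) - (a1:ℚ))*(5*(a5:ℚ) - 12*(a4:ℚ) + 9*(a3:ℚ) - 2*(a2:ℚ)) - ((a5:ℚ) - 3*(a4:ℚ) + 3*(a3:ℚ) - (a2:ℚ))*(4*(a4:ℚ) - 9*(a3:ℚ) + 6*(a2:ℚ) - 1*(a1:ℚ))))*H0 + (((a3:ℚ)^2 - 3*(a2:ℚ)^2 + 3*(a1:ℚ)^2 - (a0:ℚ)^2)*(((a5:ℚ) - 3*(a4:ℚ) + 3*(a3:ℚ) - (a2:ℚ))*(6*(a6:ℚ) - 15*(a5:ℚ) + 12*(a4:ℚ) - 3*(a3:ℚ)) - ((a6:ℚ) - 3*(a5:ℚ) + 3*(a4:ℚ) - (a3:ℚ))*(5*(a5:ℚ) - 12*(a4:ℚ) + 9*(a3:ℚ)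 - 2*(a2:ℚ))) - ((a5:ℚ)^2 - 3*(a4:ℚ)^2 + 3*(a3:ℚ)^2 - (a2:ℚ)^2)*(((a3:ℚ) - 3*(a2:ℚ) + 3*(a1:ℚ) - (a0:ℚ))*(6*(a6:ℚ) - 15*(a5:ℚ) + 12*(a4:ℚ) - 3*(a3:ℚ)) - ((a6:ℚ) - 3*(a5:ℚ) + 3*(a4:ℚ) - (a3:ℚ))*(3*(a3:ℚ) - 6*(a2:ℚ) + 3*(a1:ℚ) - 0*(a0:ℚ))) + ((a6:ℚ)^2 - 3*(a5:ℚ)^2 + 3*(a4:ℚ)^2 - (a3:ℚ)^2)*(((a3:ℚ) - 3*(a2:ℚ) + 3*(a1:ℚ) - (a0:ℚ))*(5*(a5:ℚ) - 12*(a4:ℚ) + 9*(a3:ℚ) - 2*(a2:ℚ)) - ((a5:ℚ) - 3*(a4:ℚ) + 3*(a3:ℚ) - (a2:ℚ))*(3*(a3:ℚ) - 6*(a2:ℚ) + 3*(a1:ℚ) - 0*(a0:ℚ))))*H1 - (((a3:ℚ)^2 - 3*(a2:ℚ)^2 + 3*(a1:ℚ)^2 - (a0:ℚ)^2)*(((a4:ℚ)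 - 3*(a3:ℚ) + 3*(a2:ℚ) - (a1:ℚ))*(6*(a6:ℚ) - 15*(a5:ℚ) + 12*(a4:ℚ) - 3*(a3:ℚ)) - ((a6:ℚ) - 3*(a5:ℚ) + 3*(a4:ℚ) - (a3:ℚ))*(4*(a4:ℚ) - 9*(a3:ℚ) + 6*(a2:ℚ) - 1*(a1:ℚ))) - ((a4:ℚ)^2 - 3*(a3:ℚ)^2 + 3*(a2:ℚ)^2 - (a1:ℚ)^2)*(((a3:ℚ) - 3*(a2:ℚ) + 3*(a1:ℚ) - (a0:ℚ))*(6*(a6:ℚ) - 15*(a5:ℚ) + 12*(a4:ℚ) - 3*(a3:ℚ)) - ((a6:ℚ) - 3*(a5:ℚ) + 3*(a4:ℚ) - (a3:ℚ))*(3*(a3:ℚ) - 6*(a2:ℚ) + 3*(a1:ℚ) - 0*(a0:ℚ))) + ((a6:ℚ)^2 - 3*(a5:ℚ)^2 + 3*(a4:ℚ)^2 - (a3:ℚ)^2)*(((a3:ℚ) - 3*(a2:ℚ) + 3*(a1:ℚ) - (a0:ℚ))*(4*(a4:ℚ) - 9*(a3:ℚ) + 6*(a2:ℚ) - 1*(a1:ℚ))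 - ((a4:ℚ) - 3*(a3:ℚ) + 3*(a2:ℚ) - (a1:ℚ))*(3*(a3:ℚ) - 6*(a2:ℚ) + 3*(a1:ℚ) - 0*(a0:ℚ))))*H2 + (((a3:ℚ)^2 - 3*(a2:ℚ)^2 + 3*(a1:ℚ)^2 - (a0:ℚ)^2)*(((a4:ℚ) - 3*(a3:ℚ) + 3*(a2:ℚ) - (a1:ℚ))*(5*(a5:ℚ) - 12*(a4:ℚ) + 9*(a3:ℚ) - 2*(a2:ℚ)) - ((a5:ℚ) - 3*(a4:ℚ) + 3*(a3:ℚ) - (a2:ℚ))*(4*(a4:ℚ) - 9*(a3:ℚ) + 6*(a2:ℚ) - 1*(a1:ℚ))) - ((a4:ℚ)^2 - 3*(a3:ℚ)^2 + 3*(a2:ℚ)^2 - (a1:ℚ)^2)*(((a3:ℚ) - 3*(a2:ℚ) + 3*(a1:ℚ) - (a0:ℚ))*(5*(a5:ℚ) - 12*(a4:ℚ) + 9*(a3:ℚ) - 2*(a2:ℚ)) - ((a5:ℚ) - 3*(a4:ℚ) + 3*(a3:ℚ) - (a2:ℚ))*(3*(a3:ℚ) - 6*(a2:ℚ) + 3*(a1:ℚ)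 - 0*(a0:ℚ))) + ((a5:ℚ)^2 - 3*(a4:ℚ)^2 + 3*(a3:ℚ)^2 - (a2:ℚ)^2)*(((a3:ℚ) - 3*(a2:ℚ) + 3*(a1:ℚ) - (a0:ℚ))*(4*(a4:ℚ) - 9*(a3:ℚ) + 6*(a2:ℚ) - 1*(a1:ℚ)) - ((a4:ℚ) - 3*(a3:ℚ) + 3*(a2:ℚ) - (a1:ℚ))*(3*(a3:ℚ) - 6*(a2:ℚ) + 3*(a1:ℚ) - 0*(a0:ℚ))))*H3
    rcases mul_eq_zero.mp hprod with h | h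
    · linarith
    · exact absurd h hD'
  · have hX' : (2*(a4:ℚ)*(a6:ℚ) + 24*(a3:ℚ)*(a5:ℚ) + 24*(a2:ℚ)*(a6:ℚ) + 30*(a2:ℚ)*(a4:ℚ) + 48*(a1:ℚ)*(a5:ℚ) + 6*(a1:ℚ)*(a2:ℚ) + 6*(a0:ℚ)*(a6:ℚ) + 8*(a0:ℚ)*(a4:ℚ) + 6*(a0:ℚ)*(a3:ℚ) + (a0:ℚ)*(a1:ℚ)) - (3*(a4:ℚ)*(a5:ℚ) + 12*(a3:ℚ)*(a6:ℚ) + 10*(a3:ℚ)*(a4:ℚ) + 54*(a2:ℚ)*(a5:ℚ) + 20*(a1:ℚ)*(a6:ℚ) + 27*(a1:ℚ)*(a4:ℚ) + 8*(a1:ℚ)*(a3:ℚ) + 15*(a0:ℚ)*(a5:ℚ) + 6*(a0:ℚ)*(a2:ℚ)) ≠ 0 := sub_ne_zero_of_ne (by exact_mod_cast hX)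
    have hY' : ((a3:ℚ)*(a4:ℚ)*(a6:ℚ)^2 + 6*(a3:ℚ)*(a4:ℚ)^2*(a5:ℚ) + 2*(a3:ℚ)^2*(a4:ℚ)*(a6:ℚ) + 18*(a2:ℚ)*(a4:ℚ)*(a5:ℚ)^2 + 12*(a2:ℚ)*(a4:ℚ)^2*(a6:ℚ) + 6*(a2:ℚ)*(a3:ℚ)*(a6:ℚ)^2 + 15*(a2:ℚ)*(a3:ℚ)*(a4:ℚ)^2 + 54*(a2:ℚ)*(a3:ℚ)^2*(a5:ℚ) + 9*(a2:ℚ)^2*(a4:ℚ)*(a5:ℚ) + 18*(a2:ℚ)^2*(a3:ℚ)*(a6:ℚ) + 15*(a2:ℚ)^2*(a3:ℚ)*(a4:ℚ) + 9*(a1:ℚ)*(a4:ℚ)*(a6:ℚ)^2 + 36*(a1:ℚ)*(a4:ℚ)^2*(a5:ℚ) + 48*(a1:ℚ)*(a3:ℚ)*(a5:ℚ)^2 + 40*(a1:ℚ)*(a3:ℚ)^2*(a6:ℚ) + 63*(a1:ℚ)*(a3:ℚ)^2*(a4:ℚ) + 6*(a1:ℚ)*(a2:ℚ)*(a6:ℚ)^2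 + 18*(a1:ℚ)*(a2:ℚ)*(a4:ℚ)^2 + 72*(a1:ℚ)*(a2:ℚ)^2*(a5:ℚ) + 12*(a1:ℚ)*(a2:ℚ)^2*(a3:ℚ) + 6*(a1:ℚ)^2*(a4:ℚ)*(a6:ℚ) + 48*(a1:ℚ)^2*(a3:ℚ)*(a5:ℚ) + 24*(a1:ℚ)^2*(a2:ℚ)*(a6:ℚ) + 36*(a1:ℚ)^2*(a2:ℚ)*(a4:ℚ) + 12*(a0:ℚ)*(a4:ℚ)*(a5:ℚ)^2 + 6*(a0:ℚ)*(a4:ℚ)^2*(a6:ℚ) + 9*(a0:ℚ)*(a3:ℚ)*(a6:ℚ)^2 + 24*(a0:ℚ)*(a3:ℚ)*(a4:ℚ)^2 + 45*(a0:ℚ)*(a3:ℚ)^2*(a5:ℚ) + 18*(a0:ℚ)*(a2:ℚ)*(a5:ℚ)^2 + 6*(a0:ℚ)*(a2:ℚ)*(a3:ℚ)^2 + 18*(a0:ℚ)*(a2:ℚ)^2*(a6:ℚ) + 36*(a0:ℚ)*(a2:ℚ)^2*(a4:ℚ) + (a0:ℚ)*(a1:ℚ)*(a6:ℚ)^2 +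 3*(a0:ℚ)*(a1:ℚ)*(a4:ℚ)^2 + 15*(a0:ℚ)*(a1:ℚ)^2*(a5:ℚ) + 3*(a0:ℚ)*(a1:ℚ)^2*(a3:ℚ) + 3*(a0:ℚ)^2*(a4:ℚ)*(a5:ℚ) + 9*(a0:ℚ)^2*(a3:ℚ)*(a6:ℚ) + 8*(a0:ℚ)^2*(a3:ℚ)*(a4:ℚ) + 27*(a0:ℚ)^2*(a2:ℚ)*(a5:ℚ) + 3*(a0:ℚ)^2*(a2:ℚ)*(a3:ℚ) + 5*(a0:ℚ)^2*(a1:ℚ)*(a6:ℚ) + 9*(a0:ℚ)^2*(a1:ℚ)*(a4:ℚ)) = (3*(a3:ℚ)*(a4:ℚ)*(a5:ℚ)^2 + 3*(a3:ℚ)*(a4:ℚ)^2*(a6:ℚ) + 3*(a3:ℚ)^2*(a4:ℚ)*(a5:ℚ) + 6*(a2:ℚ)*(a4:ℚ)*(a6:ℚ)^2 + 27*(a2:ℚ)*(a4:ℚ)^2*(a5:ℚ) + 18*(a2:ℚ)*(a3:ℚ)*(a5:ℚ)^2 + 24*(a2:ℚ)*(a3:ℚ)^2*(a6:ℚ) +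 30*(a2:ℚ)*(a3:ℚ)^2*(a4:ℚ) + 6*(a2:ℚ)^2*(a4:ℚ)*(a6:ℚ) + 36*(a2:ℚ)^2*(a3:ℚ)*(a5:ℚ) + 27*(a1:ℚ)*(a4:ℚ)*(a5:ℚ)^2 + 15*(a1:ℚ)*(a4:ℚ)^2*(a6:ℚ) + 16*(a1:ℚ)*(a3:ℚ)*(a6:ℚ)^2 + 42*(a1:ℚ)*(a3:ℚ)*(a4:ℚ)^2 + 96*(a1:ℚ)*(a3:ℚ)^2*(a5:ℚ) + 18*(a1:ℚ)*(a2:ℚ)*(a5:ℚ)^2 + 6*(a1:ℚ)*(a2:ℚ)*(a3:ℚ)^2 + 30*(a1:ℚ)*(a2:ℚ)^2*(a6:ℚ) + 54*(a1:ℚ)*(a2:ℚ)^2*(a4:ℚ) + 9*(a1:ℚ)^2*(a4:ℚ)*(a5:ℚ) + 24*(a1:ℚ)^2*(a3:ℚ)*(a6:ℚ) + 21*(a1:ℚ)^2*(a3:ℚ)*(a4:ℚ) + 54*(a1:ℚ)^2*(a2:ℚ)*(a5:ℚ) + 6*(a1:ℚ)^2*(a2:ℚ)*(a3:ℚ) +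 4*(a0:ℚ)*(a4:ℚ)*(a6:ℚ)^2 + 15*(a0:ℚ)*(a4:ℚ)^2*(a5:ℚ) + 27*(a0:ℚ)*(a3:ℚ)*(a5:ℚ)^2 + 18*(a0:ℚ)*(a3:ℚ)^2*(a6:ℚ) + 32*(a0:ℚ)*(a3:ℚ)^2*(a4:ℚ) + 6*(a0:ℚ)*(a2:ℚ)*(a6:ℚ)^2 + 18*(a0:ℚ)*(a2:ℚ)*(a4:ℚ)^2 + 45*(a0:ℚ)*(a2:ℚ)^2*(a5:ℚ) + 9*(a0:ℚ)*(a2:ℚ)^2*(a3:ℚ) + 3*(a0:ℚ)*(a1:ℚ)*(a5:ℚ)^2 + (a0:ℚ)*(a1:ℚ)*(a3:ℚ)^2 + 6*(a0:ℚ)*(a1:ℚ)^2*(a6:ℚ) + 12*(a0:ℚ)*(a1:ℚ)^2*(a4:ℚ) + 2*(a0:ℚ)^2*(a4:ℚ)*(a6:ℚ) + 18*(a0:ℚ)^2*(a3:ℚ)*(a5:ℚ) + 12*(a0:ℚ)^2*(a2:ℚ)*(a6:ℚ) + 18*(a0:ℚ)^2*(a2:ℚ)*(a4:ℚ) + 12*(a0:ℚ)^2*(a1:ℚ)*(a5:ℚ)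 + 2*(a0:ℚ)^2*(a1:ℚ)*(a3:ℚ)) := by exact_mod_cast hY
    have hid : (6*e3) * ((2*(a4:ℚ)*(a6:ℚ) + 24*(a3:ℚ)*(a5:ℚ) + 24*(a2:ℚ)*(a6:ℚ) + 30*(a2:ℚ)*(a4:ℚ) + 48*(a1:ℚ)*(a5:ℚ) + 6*(a1:ℚ)*(a2:ℚ) + 6*(a0:ℚ)*(a6:ℚ) + 8*(a0:ℚ)*(a4:ℚ) + 6*(a0:ℚ)*(a3:ℚ) + (a0:ℚ)*(a1:ℚ)) - (3*(a4:ℚ)*(a5:ℚ) + 12*(a3:ℚ)*(a6:ℚ) + 10*(a3:ℚ)*(a4:ℚ) + 54*(a2:ℚ)*(a5:ℚ) + 20*(a1:ℚ)*(a6:ℚ) + 27*(a1:ℚ)*(a4:ℚ) + 8*(a1:ℚ)*(a3:ℚ) + 15*(a0:ℚ)*(a5:ℚ) + 6*(a0:ℚ)*(a2:ℚ))) + A * (((a3:ℚ)*(a4:ℚ)*(a6:ℚ)^2 + 6*(a3:ℚ)*(a4:ℚ)^2*(a5:ℚ) + 2*(a3:ℚ)^2*(a4:ℚ)*(a6:ℚ)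 + 18*(a2:ℚ)*(a4:ℚ)*(a5:ℚ)^2 + 12*(a2:ℚ)*(a4:ℚ)^2*(a6:ℚ) + 6*(a2:ℚ)*(a3:ℚ)*(a6:ℚ)^2 + 15*(a2:ℚ)*(a3:ℚ)*(a4:ℚ)^2 + 54*(a2:ℚ)*(a3:ℚ)^2*(a5:ℚ) + 9*(a2:ℚ)^2*(a4:ℚ)*(a5:ℚ) + 18*(a2:ℚ)^2*(a3:ℚ)*(a6:ℚ) + 15*(a2:ℚ)^2*(a3:ℚ)*(a4:ℚ) + 9*(a1:ℚ)*(a4:ℚ)*(a6:ℚ)^2 + 36*(a1:ℚ)*(a4:ℚ)^2*(a5:ℚ) + 48*(a1:ℚ)*(a3:ℚ)*(a5:ℚ)^2 + 40*(a1:ℚ)*(a3:ℚ)^2*(a6:ℚ) + 63*(a1:ℚ)*(a3:ℚ)^2*(a4:ℚ) + 6*(a1:ℚ)*(a2:ℚ)*(a6:ℚ)^2 + 18*(a1:ℚ)*(a2:ℚ)*(a4:ℚ)^2 + 72*(a1:ℚ)*(a2:ℚ)^2*(a5:ℚ) + 12*(a1:ℚ)*(a2:ℚ)^2*(a3:ℚ)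 + 6*(a1:ℚ)^2*(a4:ℚ)*(a6:ℚ) + 48*(a1:ℚ)^2*(a3:ℚ)*(a5:ℚ) + 24*(a1:ℚ)^2*(a2:ℚ)*(a6:ℚ) + 36*(a1:ℚ)^2*(a2:ℚ)*(a4:ℚ) + 12*(a0:ℚ)*(a4:ℚ)*(a5:ℚ)^2 + 6*(a0:ℚ)*(a4:ℚ)^2*(a6:ℚ) + 9*(a0:ℚ)*(a3:ℚ)*(a6:ℚ)^2 + 24*(a0:ℚ)*(a3:ℚ)*(a4:ℚ)^2 + 45*(a0:ℚ)*(a3:ℚ)^2*(a5:ℚ) + 18*(a0:ℚ)*(a2:ℚ)*(a5:ℚ)^2 + 6*(a0:ℚ)*(a2:ℚ)*(a3:ℚ)^2 + 18*(a0:ℚ)*(a2:ℚ)^2*(a6:ℚ) + 36*(a0:ℚ)*(a2:ℚ)^2*(a4:ℚ) + (a0:ℚ)*(a1:ℚ)*(a6:ℚ)^2 + 3*(a0:ℚ)*(a1:ℚ)*(a4:ℚ)^2 + 15*(a0:ℚ)*(a1:ℚ)^2*(a5:ℚ) + 3*(a0:ℚ)*(a1:ℚ)^2*(a3:ℚ)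 + 3*(a0:ℚ)^2*(a4:ℚ)*(a5:ℚ) + 9*(a0:ℚ)^2*(a3:ℚ)*(a6:ℚ) + 8*(a0:ℚ)^2*(a3:ℚ)*(a4:ℚ) + 27*(a0:ℚ)^2*(a2:ℚ)*(a5:ℚ) + 3*(a0:ℚ)^2*(a2:ℚ)*(a3:ℚ) + 5*(a0:ℚ)^2*(a1:ℚ)*(a6:ℚ) + 9*(a0:ℚ)^2*(a1:ℚ)*(a4:ℚ)) - (3*(a3:ℚ)*(a4:ℚ)*(a5:ℚ)^2 + 3*(a3:ℚ)*(a4:ℚ)^2*(a6:ℚ) + 3*(a3:ℚ)^2*(a4:ℚ)*(a5:ℚ) + 6*(a2:ℚ)*(a4:ℚ)*(a6:ℚ)^2 + 27*(a2:ℚ)*(a4:ℚ)^2*(a5:ℚ) + 18*(a2:ℚ)*(a3:ℚ)*(a5:ℚ)^2 + 24*(a2:ℚ)*(a3:ℚ)^2*(a6:ℚ) + 30*(a2:ℚ)*(a3:ℚ)^2*(a4:ℚ) + 6*(a2:ℚ)^2*(a4:ℚ)*(a6:ℚ) + 36*(a2:ℚ)^2*(a3:ℚ)*(a5:ℚ)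 + 27*(a1:ℚ)*(a4:ℚ)*(a5:ℚ)^2 + 15*(a1:ℚ)*(a4:ℚ)^2*(a6:ℚ) + 16*(a1:ℚ)*(a3:ℚ)*(a6:ℚ)^2 + 42*(a1:ℚ)*(a3:ℚ)*(a4:ℚ)^2 + 96*(a1:ℚ)*(a3:ℚ)^2*(a5:ℚ) + 18*(a1:ℚ)*(a2:ℚ)*(a5:ℚ)^2 + 6*(a1:ℚ)*(a2:ℚ)*(a3:ℚ)^2 + 30*(a1:ℚ)*(a2:ℚ)^2*(a6:ℚ) + 54*(a1:ℚ)*(a2:ℚ)^2*(a4:ℚ) + 9*(a1:ℚ)^2*(a4:ℚ)*(a5:ℚ) + 24*(a1:ℚ)^2*(a3:ℚ)*(a6:ℚ) + 21*(a1:ℚ)^2*(a3:ℚ)*(a4:ℚ) + 54*(a1:ℚ)^2*(a2:ℚ)*(a5:ℚ) + 6*(a1:ℚ)^2*(a2:ℚ)*(a3:ℚ) + 4*(a0:ℚ)*(a4:ℚ)*(a6:ℚ)^2 + 15*(a0:ℚ)*(a4:ℚ)^2*(a5:ℚ) + 27*(a0:ℚ)*(a3:ℚ)*(a5:ℚ)^2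 + 18*(a0:ℚ)*(a3:ℚ)^2*(a6:ℚ) + 32*(a0:ℚ)*(a3:ℚ)^2*(a4:ℚ) + 6*(a0:ℚ)*(a2:ℚ)*(a6:ℚ)^2 + 18*(a0:ℚ)*(a2:ℚ)*(a4:ℚ)^2 + 45*(a0:ℚ)*(a2:ℚ)^2*(a5:ℚ) + 9*(a0:ℚ)*(a2:ℚ)^2*(a3:ℚ) + 3*(a0:ℚ)*(a1:ℚ)*(a5:ℚ)^2 + (a0:ℚ)*(a1:ℚ)*(a3:ℚ)^2 + 6*(a0:ℚ)*(a1:ℚ)^2*(a6:ℚ) + 12*(a0:ℚ)*(a1:ℚ)^2*(a4:ℚ) + 2*(a0:ℚ)^2*(a4:ℚ)*(a6:ℚ) + 18*(a0:ℚ)^2*(a3:ℚ)*(a5:ℚ) + 12*(a0:ℚ)^2*(a2:ℚ)*(a6:ℚ) + 18*(a0:ℚ)^2*(a2:ℚ)*(a4:ℚ) + 12*(a0:ℚ)^2*(a1:ℚ)*(a5:ℚ) + 2*(a0:ℚ)^2*(a1:ℚ)*(a3:ℚ))) = 0 := by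
      linear_combination (((a4:ℚ) - 3*(a3:ℚ) + 3*(a2:ℚ) - (a1:ℚ))*(6*(a6:ℚ) - 15*(a5:ℚ) + 12*(a4:ℚ) - 3*(a3:ℚ)) - ((a6:ℚ) - 3*(a5:ℚ) + 3*(a4:ℚ) - (a3:ℚ))*(4*(a4:ℚ) - 9*(a3:ℚ) + 6*(a2:ℚ) - 1*(a1:ℚ)))*H0 + (-(((a3:ℚ) - 3*(a2:ℚ) + 3*(a1:ℚ) - (a0:ℚ))*(6*(a6:ℚ) - 15*(a5:ℚ) + 12*(a4:ℚ) - 3*(a3:ℚ)) - ((a6:ℚ) - 3*(a5:ℚ) + 3*(a4:ℚ) - (a3:ℚ))*(3*(a3:ℚ) - 6*(a2:ℚ) + 3*(a1:ℚ) - 0*(a0:ℚ))))*H1 + (((a3:ℚ) - 3*(a2:ℚ) + 3*(a1:ℚ) - (a0:ℚ))*(4*(a4:ℚ) - 9*(a3:ℚ) + 6*(a2:ℚ) - 1*(a1:ℚ)) - ((a4:ℚ) - 3*(a3:ℚ) + 3*(a2:ℚ) - (a1:ℚ))*(3*(a3:ℚ) - 6*(a2:ℚ) + 3*(a1:ℚ)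 - 0*(a0:ℚ)))*H3
    have hprod : (6*e3) * ((2*(a4:ℚ)*(a6:ℚ) + 24*(a3:ℚ)*(a5:ℚ) + 24*(a2:ℚ)*(a6:ℚ) + 30*(a2:ℚ)*(a4:ℚ) + 48*(a1:ℚ)*(a5:ℚ) + 6*(a1:ℚ)*(a2:ℚ) + 6*(a0:ℚ)*(a6:ℚ) + 8*(a0:ℚ)*(a4:ℚ) + 6*(a0:ℚ)*(a3:ℚ) + (a0:ℚ)*(a1:ℚ)) - (3*(a4:ℚ)*(a5:ℚ) + 12*(a3:ℚ)*(a6:ℚ) + 10*(a3:ℚ)*(a4:ℚ) + 54*(a2:ℚ)*(a5:ℚ) + 20*(a1:ℚ)*(a6:ℚ) + 27*(a1:ℚ)*(a4:ℚ) + 8*(a1:ℚ)*(a3:ℚ) + 15*(a0:ℚ)*(a5:ℚ) + 6*(a0:ℚ)*(a2:ℚ))) = 0 := by linear_combination hid - A*hY'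
    rcases mul_eq_zero.mp hprod with h | h
    · linarith
    · exact absurd h hX'
  · have hp' : ((a4:ℚ) + 3*(a2:ℚ)) = (3*(a3:ℚ) + (a1:ℚ)) := by exact_mod_cast hp1
    have hq' : ((a4:ℚ)^2 + 3*(a2:ℚ)^2) = (3*(a3:ℚ)^2 + (a1:ℚ)^2) := by exact_mod_cast hq1
    have hr' : (4*(a4:ℚ) + 6*(a2:ℚ)) = (9*(a3:ℚ) + (a1:ℚ)) := by exact_mod_cast hr1
    linear_combination (H1 - A*hq' - B*hp' - C*hr')/6
  · have hX' : (6*(a5:ℚ)^2*(a6:ℚ) + 16*(a4:ℚ)*(a6:ℚ)^2 + 50*(a4:ℚ)^2*(a5:ℚ) + 60*(a3:ℚ)*(a5:ℚ)^2 + 36*(a3:ℚ)^2*(a6:ℚ) + 80*(a3:ℚ)^2*(a4:ℚ) + 8*(a2:ℚ)*(a6:ℚ)^2 + 40*(a2:ℚ)*(a4:ℚ)^2 + 75*(a2:ℚ)^2*(a5:ℚ) + 30*(a2:ℚ)^2*(a3:ℚ) + 4*(a1:ℚ)*(a5:ℚ)^2 + 4*(a1:ℚ)*(a3:ℚ)^2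 + 6*(a1:ℚ)^2*(a6:ℚ) + 24*(a1:ℚ)^2*(a4:ℚ) + 2*(a1:ℚ)^2*(a2:ℚ)) - (5*(a5:ℚ)*(a6:ℚ)^2 + 40*(a4:ℚ)*(a5:ℚ)^2 + 24*(a4:ℚ)^2*(a6:ℚ) + 18*(a3:ℚ)*(a6:ℚ)^2 + 60*(a3:ℚ)*(a4:ℚ)^2 + 100*(a3:ℚ)^2*(a5:ℚ) + 30*(a2:ℚ)*(a5:ℚ)^2 + 20*(a2:ℚ)*(a3:ℚ)^2 + 24*(a2:ℚ)^2*(a6:ℚ) + 80*(a2:ℚ)^2*(a4:ℚ) + (a1:ℚ)*(a6:ℚ)^2 + 6*(a1:ℚ)*(a4:ℚ)^2 + (a1:ℚ)*(a2:ℚ)^2 + 20*(a1:ℚ)^2*(a5:ℚ) + 12*(a1:ℚ)^2*(a3:ℚ)) ≠ 0 := sub_ne_zero_of_ne (by exact_mod_cast hX)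
    have hY' : (2*(a4:ℚ)*(a5:ℚ)^2*(a6:ℚ) + 6*(a3:ℚ)*(a5:ℚ)*(a6:ℚ)^2 + 10*(a3:ℚ)*(a4:ℚ)*(a5:ℚ)^2 + 18*(a3:ℚ)*(a4:ℚ)^2*(a6:ℚ) + 3*(a3:ℚ)^2*(a5:ℚ)*(a6:ℚ) + 10*(a3:ℚ)^2*(a4:ℚ)*(a5:ℚ) + 12*(a2:ℚ)*(a5:ℚ)^2*(a6:ℚ) + 16*(a2:ℚ)*(a4:ℚ)*(a6:ℚ)^2 + 45*(a2:ℚ)*(a4:ℚ)^2*(a5:ℚ) + 15*(a2:ℚ)*(a3:ℚ)*(a5:ℚ)^2 + 24*(a2:ℚ)*(a3:ℚ)^2*(a6:ℚ) + 20*(a2:ℚ)*(a3:ℚ)^2*(a4:ℚ) + 16*(a2:ℚ)^2*(a4:ℚ)*(a6:ℚ) + 30*(a2:ℚ)^2*(a3:ℚ)*(a5:ℚ) + 4*(a1:ℚ)*(a5:ℚ)*(a6:ℚ)^2 + 18*(a1:ℚ)*(a4:ℚ)*(a5:ℚ)^2 + 15*(a1:ℚ)*(a4:ℚ)^2*(a6:ℚ)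 + 6*(a1:ℚ)*(a3:ℚ)*(a6:ℚ)^2 + 12*(a1:ℚ)*(a3:ℚ)*(a4:ℚ)^2 + 32*(a1:ℚ)*(a3:ℚ)^2*(a5:ℚ) + 3*(a1:ℚ)*(a2:ℚ)*(a5:ℚ)^2 + (a1:ℚ)*(a2:ℚ)*(a3:ℚ)^2 + 5*(a1:ℚ)*(a2:ℚ)^2*(a6:ℚ) + 9*(a1:ℚ)*(a2:ℚ)^2*(a4:ℚ) + (a1:ℚ)^2*(a5:ℚ)*(a6:ℚ) + 6*(a1:ℚ)^2*(a4:ℚ)*(a5:ℚ) + 9*(a1:ℚ)^2*(a3:ℚ)*(a6:ℚ) + 6*(a1:ℚ)^2*(a3:ℚ)*(a4:ℚ) + 9*(a1:ℚ)^2*(a2:ℚ)*(a5:ℚ) + (a1:ℚ)^2*(a2:ℚ)*(a3:ℚ)) = ((a4:ℚ)*(a5:ℚ)*(a6:ℚ)^2 + (a4:ℚ)^2*(a5:ℚ)*(a6:ℚ) + 9*(a3:ℚ)*(a5:ℚ)^2*(a6:ℚ) + 6*(a3:ℚ)*(a4:ℚ)*(a6:ℚ)^2 + 20*(a3:ℚ)*(a4:ℚ)^2*(a5:ℚ)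 + 12*(a3:ℚ)^2*(a4:ℚ)*(a6:ℚ) + 9*(a2:ℚ)*(a5:ℚ)*(a6:ℚ)^2 + 30*(a2:ℚ)*(a4:ℚ)*(a5:ℚ)^2 + 32*(a2:ℚ)*(a4:ℚ)^2*(a6:ℚ) + 6*(a2:ℚ)*(a3:ℚ)*(a6:ℚ)^2 + 10*(a2:ℚ)*(a3:ℚ)*(a4:ℚ)^2 + 45*(a2:ℚ)*(a3:ℚ)^2*(a5:ℚ) + 3*(a2:ℚ)^2*(a5:ℚ)*(a6:ℚ) + 15*(a2:ℚ)^2*(a4:ℚ)*(a5:ℚ) + 18*(a2:ℚ)^2*(a3:ℚ)*(a6:ℚ) + 10*(a2:ℚ)^2*(a3:ℚ)*(a4:ℚ) + 5*(a1:ℚ)*(a5:ℚ)^2*(a6:ℚ) + 9*(a1:ℚ)*(a4:ℚ)*(a6:ℚ)^2 + 24*(a1:ℚ)*(a4:ℚ)^2*(a5:ℚ) + 16*(a1:ℚ)*(a3:ℚ)*(a5:ℚ)^2 + 15*(a1:ℚ)*(a3:ℚ)^2*(a6:ℚ) + 18*(a1:ℚ)*(a3:ℚ)^2*(a4:ℚ)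 + (a1:ℚ)*(a2:ℚ)*(a6:ℚ)^2 + 3*(a1:ℚ)*(a2:ℚ)*(a4:ℚ)^2 + 12*(a1:ℚ)*(a2:ℚ)^2*(a5:ℚ) + 2*(a1:ℚ)*(a2:ℚ)^2*(a3:ℚ) + 6*(a1:ℚ)^2*(a4:ℚ)*(a6:ℚ) + 16*(a1:ℚ)^2*(a3:ℚ)*(a5:ℚ) + 4*(a1:ℚ)^2*(a2:ℚ)*(a6:ℚ) + 6*(a1:ℚ)^2*(a2:ℚ)*(a4:ℚ)) := by exact_mod_cast hY
    have hid : (6*e3) * ((6*(a5:ℚ)^2*(a6:ℚ) + 16*(a4:ℚ)*(a6:ℚ)^2 + 50*(a4:ℚ)^2*(a5:ℚ) + 60*(a3:ℚ)*(a5:ℚ)^2 + 36*(a3:ℚ)^2*(a6:ℚ) + 80*(a3:ℚ)^2*(a4:ℚ) + 8*(a2:ℚ)*(a6:ℚ)^2 + 40*(a2:ℚ)*(a4:ℚ)^2 + 75*(a2:ℚ)^2*(a5:ℚ) + 30*(a2:ℚ)^2*(a3:ℚ) + 4*(a1:ℚ)*(a5:ℚ)^2 + 4*(a1:ℚ)*(a3:ℚ)^2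 + 6*(a1:ℚ)^2*(a6:ℚ) + 24*(a1:ℚ)^2*(a4:ℚ) + 2*(a1:ℚ)^2*(a2:ℚ)) - (5*(a5:ℚ)*(a6:ℚ)^2 + 40*(a4:ℚ)*(a5:ℚ)^2 + 24*(a4:ℚ)^2*(a6:ℚ) + 18*(a3:ℚ)*(a6:ℚ)^2 + 60*(a3:ℚ)*(a4:ℚ)^2 + 100*(a3:ℚ)^2*(a5:ℚ) + 30*(a2:ℚ)*(a5:ℚ)^2 + 20*(a2:ℚ)*(a3:ℚ)^2 + 24*(a2:ℚ)^2*(a6:ℚ) + 80*(a2:ℚ)^2*(a4:ℚ) + (a1:ℚ)*(a6:ℚ)^2 + 6*(a1:ℚ)*(a4:ℚ)^2 + (a1:ℚ)*(a2:ℚ)^2 + 20*(a1:ℚ)^2*(a5:ℚ) + 12*(a1:ℚ)^2*(a3:ℚ))) + B * ((2*(a4:ℚ)*(a5:ℚ)^2*(a6:ℚ) + 6*(a3:ℚ)*(a5:ℚ)*(a6:ℚ)^2 + 10*(a3:ℚ)*(a4:ℚ)*(a5:ℚ)^2 + 18*(a3:ℚ)*(a4:ℚ)^2*(a6:ℚ)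 + 3*(a3:ℚ)^2*(a5:ℚ)*(a6:ℚ) + 10*(a3:ℚ)^2*(a4:ℚ)*(a5:ℚ) + 12*(a2:ℚ)*(a5:ℚ)^2*(a6:ℚ) + 16*(a2:ℚ)*(a4:ℚ)*(a6:ℚ)^2 + 45*(a2:ℚ)*(a4:ℚ)^2*(a5:ℚ) + 15*(a2:ℚ)*(a3:ℚ)*(a5:ℚ)^2 + 24*(a2:ℚ)*(a3:ℚ)^2*(a6:ℚ) + 20*(a2:ℚ)*(a3:ℚ)^2*(a4:ℚ) + 16*(a2:ℚ)^2*(a4:ℚ)*(a6:ℚ) + 30*(a2:ℚ)^2*(a3:ℚ)*(a5:ℚ) + 4*(a1:ℚ)*(a5:ℚ)*(a6:ℚ)^2 + 18*(a1:ℚ)*(a4:ℚ)*(a5:ℚ)^2 + 15*(a1:ℚ)*(a4:ℚ)^2*(a6:ℚ) + 6*(a1:ℚ)*(a3:ℚ)*(a6:ℚ)^2 + 12*(a1:ℚ)*(a3:ℚ)*(a4:ℚ)^2 + 32*(a1:ℚ)*(a3:ℚ)^2*(a5:ℚ) + 3*(a1:ℚ)*(a2:ℚ)*(a5:ℚ)^2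 + (a1:ℚ)*(a2:ℚ)*(a3:ℚ)^2 + 5*(a1:ℚ)*(a2:ℚ)^2*(a6:ℚ) + 9*(a1:ℚ)*(a2:ℚ)^2*(a4:ℚ) + (a1:ℚ)^2*(a5:ℚ)*(a6:ℚ) + 6*(a1:ℚ)^2*(a4:ℚ)*(a5:ℚ) + 9*(a1:ℚ)^2*(a3:ℚ)*(a6:ℚ) + 6*(a1:ℚ)^2*(a3:ℚ)*(a4:ℚ) + 9*(a1:ℚ)^2*(a2:ℚ)*(a5:ℚ) + (a1:ℚ)^2*(a2:ℚ)*(a3:ℚ)) - ((a4:ℚ)*(a5:ℚ)*(a6:ℚ)^2 + (a4:ℚ)^2*(a5:ℚ)*(a6:ℚ) + 9*(a3:ℚ)*(a5:ℚ)^2*(a6:ℚ) + 6*(a3:ℚ)*(a4:ℚ)*(a6:ℚ)^2 + 20*(a3:ℚ)*(a4:ℚ)^2*(a5:ℚ) + 12*(a3:ℚ)^2*(a4:ℚ)*(a6:ℚ) + 9*(a2:ℚ)*(a5:ℚ)*(a6:ℚ)^2 + 30*(a2:ℚ)*(a4:ℚ)*(a5:ℚ)^2 + 32*(a2:ℚ)*(a4:ℚ)^2*(a6:ℚ)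 + 6*(a2:ℚ)*(a3:ℚ)*(a6:ℚ)^2 + 10*(a2:ℚ)*(a3:ℚ)*(a4:ℚ)^2 + 45*(a2:ℚ)*(a3:ℚ)^2*(a5:ℚ) + 3*(a2:ℚ)^2*(a5:ℚ)*(a6:ℚ) + 15*(a2:ℚ)^2*(a4:ℚ)*(a5:ℚ) + 18*(a2:ℚ)^2*(a3:ℚ)*(a6:ℚ) + 10*(a2:ℚ)^2*(a3:ℚ)*(a4:ℚ) + 5*(a1:ℚ)*(a5:ℚ)^2*(a6:ℚ) + 9*(a1:ℚ)*(a4:ℚ)*(a6:ℚ)^2 + 24*(a1:ℚ)*(a4:ℚ)^2*(a5:ℚ) + 16*(a1:ℚ)*(a3:ℚ)*(a5:ℚ)^2 + 15*(a1:ℚ)*(a3:ℚ)^2*(a6:ℚ) + 18*(a1:ℚ)*(a3:ℚ)^2*(a4:ℚ) + (a1:ℚ)*(a2:ℚ)*(a6:ℚ)^2 + 3*(a1:ℚ)*(a2:ℚ)*(a4:ℚ)^2 + 12*(a1:ℚ)*(a2:ℚ)^2*(a5:ℚ) + 2*(a1:ℚ)*(a2:ℚ)^2*(a3:ℚ) +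 6*(a1:ℚ)^2*(a4:ℚ)*(a6:ℚ) + 16*(a1:ℚ)^2*(a3:ℚ)*(a5:ℚ) + 4*(a1:ℚ)^2*(a2:ℚ)*(a6:ℚ) + 6*(a1:ℚ)^2*(a2:ℚ)*(a4:ℚ))) = 0 := by
      linear_combination (((a5:ℚ)^2 - 3*(a4:ℚ)^2 + 3*(a3:ℚ)^2 - (a2:ℚ)^2)*(6*(a6:ℚ) - 15*(a5:ℚ) + 12*(a4:ℚ) - 3*(a3:ℚ)) - ((a6:ℚ)^2 - 3*(a5:ℚ)^2 + 3*(a4:ℚ)^2 - (a3:ℚ)^2)*(5*(a5:ℚ) - 12*(a4:ℚ) + 9*(a3:ℚ) - 2*(a2:ℚ)))*H1 + (-(((a4:ℚ)^2 - 3*(a3:ℚ)^2 + 3*(a2:ℚ)^2 - (a1:ℚ)^2)*(6*(a6:ℚ) - 15*(a5:ℚ) + 12*(a4:ℚ) - 3*(a3:ℚ)) - ((a6:ℚ)^2 - 3*(a5:ℚ)^2 + 3*(a4:ℚ)^2 - (a3:ℚ)^2)*(4*(a4:ℚ) - 9*(a3:ℚ) + 6*(a2:ℚ) - 1*(a1:ℚ))))*H2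 + (((a4:ℚ)^2 - 3*(a3:ℚ)^2 + 3*(a2:ℚ)^2 - (a1:ℚ)^2)*(5*(a5:ℚ) - 12*(a4:ℚ) + 9*(a3:ℚ) - 2*(a2:ℚ)) - ((a5:ℚ)^2 - 3*(a4:ℚ)^2 + 3*(a3:ℚ)^2 - (a2:ℚ)^2)*(4*(a4:ℚ) - 9*(a3:ℚ) + 6*(a2:ℚ) - 1*(a1:ℚ)))*H3
    have hprod : (6*e3) * ((6*(a5:ℚ)^2*(a6:ℚ) + 16*(a4:ℚ)*(a6:ℚ)^2 + 50*(a4:ℚ)^2*(a5:ℚ) + 60*(a3:ℚ)*(a5:ℚ)^2 + 36*(a3:ℚ)^2*(a6:ℚ) + 80*(a3:ℚ)^2*(a4:ℚ) + 8*(a2:ℚ)*(a6:ℚ)^2 + 40*(a2:ℚ)*(a4:ℚ)^2 + 75*(a2:ℚ)^2*(a5:ℚ) + 30*(a2:ℚ)^2*(a3:ℚ) + 4*(a1:ℚ)*(a5:ℚ)^2 + 4*(a1:ℚ)*(a3:ℚ)^2 + 6*(a1:ℚ)^2*(a6:ℚ) + 24*(a1:ℚ)^2*(a4:ℚ) + 2*(a1:ℚ)^2*(a2:ℚ))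 - (5*(a5:ℚ)*(a6:ℚ)^2 + 40*(a4:ℚ)*(a5:ℚ)^2 + 24*(a4:ℚ)^2*(a6:ℚ) + 18*(a3:ℚ)*(a6:ℚ)^2 + 60*(a3:ℚ)*(a4:ℚ)^2 + 100*(a3:ℚ)^2*(a5:ℚ) + 30*(a2:ℚ)*(a5:ℚ)^2 + 20*(a2:ℚ)*(a3:ℚ)^2 + 24*(a2:ℚ)^2*(a6:ℚ) + 80*(a2:ℚ)^2*(a4:ℚ) + (a1:ℚ)*(a6:ℚ)^2 + 6*(a1:ℚ)*(a4:ℚ)^2 + (a1:ℚ)*(a2:ℚ)^2 + 20*(a1:ℚ)^2*(a5:ℚ) + 12*(a1:ℚ)^2*(a3:ℚ))) = 0 := by linear_combination hid - B*hY'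
    rcases mul_eq_zero.mp hprod with h | h
    · linarith
    · exact absurd h hX'


/-- A Weierstrass equation `W` over `ℚ` has a simultaneous arithmetic progression of length `n`:
there are affine points `Pᵢ = (x₀ + i·d, yᵢ)` on `W` for `i = 0, …, n-1` with `d ≠ 0`, and a
permutation `σ` of `{0, …, n-1}` such that `yᵢ = b + σ(i)·e` for all `i`. -/
def HasSAP (W : WeierstrassCurve ℚ) (n : ℕ) : Prop :=
  ∃ (x₀ d b e : ℚ) (y : Fin n → ℚ) (σ : Equiv.Perm (Fin n)),
    d ≠ 0 ∧
    (∀ i : Fin n,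
      (y i) ^ 2 + W.a₁ * (x₀ + (i : ℕ) * d) * (y i) + W.a₃ * (y i) =
        (x₀ + (i : ℕ) * d) ^ 3 + W.a₂ * (x₀ + (i : ℕ) * d) ^ 2
          + W.a₄ * (x₀ + (i : ℕ) * d) + W.a₆) ∧
    (∀ i : Fin n, y i = b + ((σ i : ℕ) : ℚ) * e)

/-- There is no elliptic curve over `ℚ` (Weierstrass equation with nonzero discriminant)
possessing a simultaneous arithmetic progression of length 7. -/
theorem no_sap_of_length_seven :
    ¬ ∃ W : WeierstrassCurve ℚ, W.Δ ≠ 0 ∧ HasSAP W 7 := by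
  rintro ⟨W, -, x₀, d, b, e, y, σ, hd, hcurve, hy⟩
  have hne : ∀ i j : Fin 7, i ≠ j → (σ i : ℕ) ≠ (σ j : ℕ) :=
    fun i j hij h => hij (σ.injective (Fin.val_injective h))
  have hP : PzN (σ 0 : ℕ) (σ 1 : ℕ) (σ 2 : ℕ) (σ 3 : ℕ) (σ 4 : ℕ) (σ 5 : ℕ) (σ 6 : ℕ) :=
    perm_check _ (σ 0).isLt _ (σ 1).isLt (hne 1 0 (by decide)) _ (σ 2).isLt (hne 2 0 (by decide)) (hne 2 1 (by decide)) _ (σ 3).isLt (hne 3 0 (by decide)) (hne 3 1 (by decide)) (hne 3 2 (by decide)) _ (σ 4).isLt (hne 4 0 (by decide)) (hne 4 1 (by decide)) (hne 4 2 (by decide)) (hne 4 3 (by decide)) _ (σ 5).isLt (hne 5 0 (by decide)) (hne 5 1 (by decide)) (hne 5 2 (by decide)) (hne 5 3 (by decide)) (hne 5 4 (by decide)) _ (σ 6).isLt (hne 6 0 (by decide)) (hne 6 1 (by decide)) (hne 6 2 (by decide)) (hne 6 3 (by decide)) (hne 6 4 (by decide)) (hne 6 5 (by decide))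
  have hkey : -(d^3) = 0 := by
    refine key (e^2) (2*b*e + W.a₁*x₀*e + W.a₃*e) (W.a₁*d*e)
      (b^2 + W.a₁*x₀*b + W.a₃*b - x₀^3 - W.a₂*x₀^2 - W.a₄*x₀ - W.a₆)
      (W.a₁*d*b - 3*x₀^2*d - 2*W.a₂*x₀*d - W.a₄*d)
      (-(3*x₀*d^2) - W.a₂*d^2) (-(d^3))
      (σ 0 : ℕ) (σ 1 : ℕ) (σ 2 : ℕ) (σ 3 : ℕ) (σ 4 : ℕ) (σ 5 : ℕ) (σ 6 : ℕ) hP ?_ ?_ ?_ ?_ ?_ ?_ ?_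
    · have hc := hcurve 0
      rw [hy 0] at hc
      rw [show ((0:Fin 7):ℕ) = 0 from rfl] at hc
      push_cast at hc ⊢
      linear_combination hc
    · have hc := hcurve 1
      rw [hy 1] at hc
      rw [show ((1:Fin 7):ℕ) = 1 from rfl] at hc
      push_cast at hc ⊢
      linear_combination hc
    · have hc := hcurve 2
      rw [hy 2] at hc
      rw [show ((2:Fin 7):ℕ) = 2 from rfl] at hc
      push_cast at hc ⊢
      linear_combination hc
    · have hc := hcurve 3
      rw [hy 3] at hc
      rw [show ((3:Fin 7):ℕ) = 3 from rfl] at hc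
      push_cast at hc ⊢
      linear_combination hc
    · have hc := hcurve 4
      rw [hy 4] at hc
      rw [show ((4:Fin 7):ℕ) = 4 from rfl] at hc
      push_cast at hc ⊢
      linear_combination hc
    · have hc := hcurve 5
      rw [hy 5] at hc
      rw [show ((5:Fin 7):ℕ) = 5 from rfl] at hc
      push_cast at hc ⊢
      linear_combination hc
    · have hc := hcurve 6
      rw [hy 6] at hc
      rw [show ((6:Fin 7):ℕ) = 6 from rfl] at hc
      push_cast at hc ⊢
      linear_combination hc
  apply hd
  have h3 : d^3 = 0 := by linarith
  exact pow_eq_zero_iff (by norm_num) |>.mp h3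
end

section
/- Consider the five points Q_k = ((−6+2k)/7, y'_k), k = 0,…,4, with (y'₀, y'₁, y'₂, y'₃, y'₄) = (8/49, −8/49, 24/49, 0, 16/49), which form a simultaneous arithmetic progression of length 5 on E': Y² + (5/21)XY − (2/7)Y = X³ + (92/147)X² − (20/147)X. No four of these five points form a simultaneous arithmetic progression of length 4: for every 4-element subset {k₁ < k₂ < k₃ < k₄} ⊆ {0,…,4} whose x-coordinates form an arithmetic progression, there is no permutation τ of {0,1,2,3} and no b, e ∈ ℚ with y'_{k_{j+1}} = b + τ(j)·e for j = 0,…,3. In particular there exist simultaneous arithmetic progressions of length 5 not containing any simultaneous arithmetic progression of length 4. -/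
private lemma sap_aux1 (n0 n1 n2 n3 : ℕ) (b e : ℚ)
    (l0 : n0 < 4) (l1 : n1 < 4) (l2 : n2 < 4) (l3 : n3 < 4)
    (d01 : n0 ≠ n1) (d02 : n0 ≠ n2) (d03 : n0 ≠ n3)
    (d12 : n1 ≠ n2) (d13 : n1 ≠ n3) (d23 : n2 ≠ n3)
    (h0 : (8/49:ℚ) = b + n0 * e)
    (h1 : (-8/49:ℚ) = b + n1 * e)
    (h2 : (24/49:ℚ) = b + n2 * e)
    (h3 : (0:ℚ) = b + n3 * e) : False := by
  interval_cases n0 <;> interval_cases n1 <;> interval_cases n2 <;> interval_cases n3 <;>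
    first | omega | (norm_num at h0 h1 h2 h3; linarith)

private lemma sap_aux2 (n0 n1 n2 n3 : ℕ) (b e : ℚ)
    (l0 : n0 < 4) (l1 : n1 < 4) (l2 : n2 < 4) (l3 : n3 < 4)
    (d01 : n0 ≠ n1) (d02 : n0 ≠ n2) (d03 : n0 ≠ n3)
    (d12 : n1 ≠ n2) (d13 : n1 ≠ n3) (d23 : n2 ≠ n3)
    (h0 : (-8/49:ℚ) = b + n0 * e)
    (h1 : (24/49:ℚ) = b + n1 * e)
    (h2 : (0:ℚ) = b + n2 * e)
    (h3 : (16/49:ℚ) = b + n3 * e) : False := by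
  interval_cases n0 <;> interval_cases n1 <;> interval_cases n2 <;> interval_cases n3 <;>
    first | omega | (norm_num at h0 h1 h2 h3; linarith)

/-- The five points `Q_k = ((−6+2k)/7, y'_k)` with
`(y'₀, …, y'₄) = (8/49, −8/49, 24/49, 0, 16/49)` form a simultaneous arithmetic progression
of length 5 on `E' : Y² + (5/21)XY − (2/7)Y = X³ + (92/147)X² − (20/147)X`, but no four of
them form a simultaneous arithmetic progression of length 4: for every strictly increasing
choice of four indices whose `x`-coordinates form an arithmetic progression, there is no
permutation `τ` of `{0,1,2,3}` and no `b, e ∈ ℚ` with `y'_{k_j} = b + τ(j)·e` for all `j`.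
In particular there exist simultaneous arithmetic progressions of length 5 containing no
simultaneous arithmetic progression of length 4. -/
theorem sap_of_length_five_without_sap_of_length_four :
    let x : Fin 5 → ℚ := fun k => (-6 + 2 * (k : ℕ)) / 7
    let y : Fin 5 → ℚ := ![8/49, -8/49, 24/49, 0, 16/49]
    let σ : Fin 5 → Fin 5 := ![2, 0, 4, 1, 3]
    (Function.Bijective σ ∧
      (∀ k : Fin 5,
        (y k) ^ 2 + 5/21 * (x k) * (y k) - 2/7 * (y k) =
          (x k) ^ 3 + 92/147 * (x k) ^ 2 - 20/147 * (x k)) ∧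
      (∀ k : Fin 5, x k = -6/7 + (k : ℕ) * (2/7)) ∧ (2/7 : ℚ) ≠ 0 ∧
      (∀ k : Fin 5, y k = -8/49 + ((σ k : ℕ) : ℚ) * (8/49))) ∧
    (∀ k : Fin 4 → Fin 5, StrictMono k →
      (∃ d' : ℚ, d' ≠ 0 ∧ ∀ j : Fin 4, x (k j) = x (k 0) + (j : ℕ) * d') →
      ¬ ∃ (τ : Equiv.Perm (Fin 4)) (b e : ℚ),
          ∀ j : Fin 4, y (k j) = b + ((τ j : ℕ) : ℚ) * e) := by
  intro x y σ
  constructor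
  · refine ⟨by decide, fun k => ?_, fun k => ?_, by norm_num, fun k => ?_⟩ <;>
      fin_cases k <;>
      norm_num [x, y, σ, show ((4:Fin 5):ℕ)=4 from rfl, show ((3:Fin 5):ℕ)=3 from rfl,
        show ((2:Fin 5):ℕ)=2 from rfl, show ((1:Fin 5):ℕ)=1 from rfl,
        show ((0:Fin 5):ℕ)=0 from rfl]
  · intro k hk hx'
    obtain ⟨d', hd', hdj⟩ := hx'
    have h01 : (k 0 : ℕ) < (k 1 : ℕ) := hk (by decide)
    have h12 : (k 1 : ℕ) < (k 2 : ℕ) := hk (by decide)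
    have h23 : (k 2 : ℕ) < (k 3 : ℕ) := hk (by decide)
    have h3lt : (k 3 : ℕ) < 5 := (k 3).isLt
    have e1 := hdj 1
    have e2 := hdj 2
    have e3 := hdj 3
    simp only [x, show ((1:Fin 4):ℕ)=1 from rfl, show ((2:Fin 4):ℕ)=2 from rfl,
      show ((3:Fin 4):ℕ)=3 from rfl, Nat.cast_one, Nat.cast_ofNat] at e1 e2 e3
    have hA : ((k 2 : ℕ) : ℚ) + ((k 0 : ℕ) : ℚ) = 2 * ((k 1 : ℕ) : ℚ) := by linarith
    have hB : ((k 3 : ℕ) : ℚ) + 2 * ((k 0 : ℕ) : ℚ) = 3 * ((k 1 : ℕ) : ℚ) := by linarith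
    have hA' : (k 2 : ℕ) + (k 0 : ℕ) = 2 * (k 1 : ℕ) := by exact_mod_cast hA
    have hB' : (k 3 : ℕ) + 2 * (k 0 : ℕ) = 3 * (k 1 : ℕ) := by exact_mod_cast hB
    have hcases : ((k 0:ℕ)=0 ∧ (k 1:ℕ)=1 ∧ (k 2:ℕ)=2 ∧ (k 3:ℕ)=3) ∨
        ((k 0:ℕ)=1 ∧ (k 1:ℕ)=2 ∧ (k 2:ℕ)=3 ∧ (k 3:ℕ)=4) := by omega
    rintro ⟨τ, b, e, h⟩
    have h0 := h 0
    have h1 := h 1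
    have h2 := h 2
    have h3 := h 3
    have l0 : (τ 0 : ℕ) < 4 := (τ 0).isLt
    have l1 : (τ 1 : ℕ) < 4 := (τ 1).isLt
    have l2 : (τ 2 : ℕ) < 4 := (τ 2).isLt
    have l3 : (τ 3 : ℕ) < 4 := (τ 3).isLt
    have dd : ∀ i j : Fin 4, i ≠ j → (τ i : ℕ) ≠ (τ j : ℕ) := fun i j hij hval =>
      hij (τ.injective (Fin.ext hval))
    rcases hcases with ⟨q0, q1, q2, q3⟩ | ⟨q0, q1, q2, q3⟩
    · rw [show k 0 = (0:Fin 5) from Fin.ext q0] at h0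
      rw [show k 1 = (1:Fin 5) from Fin.ext q1] at h1
      rw [show k 2 = (2:Fin 5) from Fin.ext q2] at h2
      rw [show k 3 = (3:Fin 5) from Fin.ext q3] at h3
      rw [show y 0 = 8/49 from rfl] at h0
      rw [show y 1 = -8/49 from rfl] at h1
      rw [show y 2 = 24/49 from rfl] at h2
      rw [show y 3 = 0 from rfl] at h3
      exact sap_aux1 _ _ _ _ b e l0 l1 l2 l3 (dd 0 1 (by decide)) (dd 0 2 (by decide))
        (dd 0 3 (by decide)) (dd 1 2 (by decide)) (dd 1 3 (by decide)) (dd 2 3 (by decide))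
        h0 h1 h2 h3
    · rw [show k 0 = (1:Fin 5) from Fin.ext q0] at h0
      rw [show k 1 = (2:Fin 5) from Fin.ext q1] at h1
      rw [show k 2 = (3:Fin 5) from Fin.ext q2] at h2
      rw [show k 3 = (4:Fin 5) from Fin.ext q3] at h3
      rw [show y 1 = -8/49 from rfl] at h0
      rw [show y 2 = 24/49 from rfl] at h1
      rw [show y 3 = 0 from rfl] at h2
      rw [show y 4 = 16/49 from rfl] at h3
      exact sap_aux2 _ _ _ _ b e l0 l1 l2 l3 (dd 0 1 (by decide)) (dd 0 2 (by decide))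
        (dd 0 3 (by decide)) (dd 1 2 (by decide)) (dd 1 3 (by decide)) (dd 2 3 (by decide))
        h0 h1 h2 h3
end

section
/- For all y₀, y₁, y₂, y₃ ∈ ℚ define P = y₀⁴ − 9y₀²y₁² + 6y₀²y₂² + y₀²y₃² + 21y₁⁴ − 39y₁²y₂² + 6y₁²y₃² + 21y₂⁴ − 9y₂²y₃² + y₃⁴, Q = y₀²y₃⁴ + 4y₁²y₃⁴ + y₂²y₃⁴ − 9y₂⁴y₃² − 8y₀²y₂²y₃² + 24y₁⁴y₃² − 8y₀²y₁²y₃² − 12y₁²y₂²y₃² + y₀⁴y₃² + y₀⁴y₁² − 9y₀²y₁⁴ + 20y₁⁶ − 21y₁⁴y₂² + 4y₀⁴y₂² + 20y₂⁶ − 21y₁²y₂⁴ + 24y₀²y₂⁴ − 12y₀²y₁²y₂², R = −2y₀² + 5y₁² − 4y₂² + y₃², D = 6y₃² − 6y₀² + 18y₁² − 18y₂², and a = −6R. Then for every i ∈ {0, 1, 2, 3}, the point (a + i·D, 6·yᵢ·D) lies on the curve Y² = X³ − 36P·X + 216Q; that is, (a + iD)³ − 36P·(a + iD) + 216Q = 36·yᵢ²·D².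 In particular, whenever D ≠ 0 this produces a rational elliptic curve with four points in x-arithmetic progression with common difference D. -/
/-- Bremner's rescaled parametrization: for all `y₀, y₁, y₂, y₃ ∈ ℚ`, with `P`, `Q`, `R`,
`D = 36d³`, `a = −6R` the displayed polynomials, the point `(a + i·D, 6·yᵢ·D)` lies on the
curve `Y² = X³ − 36P·X + 216Q` for each `i ∈ {0, 1, 2, 3}`; that is,
`(a + iD)³ − 36P·(a + iD) + 216Q = 36·yᵢ²·D²`.  In particular, whenever `D ≠ 0` this gives
four rational points in `x`-arithmetic progression with common difference `D`. -/
theorem bremner_parametrization_four_points (y : Fin 4 → ℚ) (P Q R D a : ℚ)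
    (hP : P = (y 0) ^ 4 - 9 * (y 0) ^ 2 * (y 1) ^ 2 + 6 * (y 0) ^ 2 * (y 2) ^ 2
      + (y 0) ^ 2 * (y 3) ^ 2 + 21 * (y 1) ^ 4 - 39 * (y 1) ^ 2 * (y 2) ^ 2
      + 6 * (y 1) ^ 2 * (y 3) ^ 2 + 21 * (y 2) ^ 4 - 9 * (y 2) ^ 2 * (y 3) ^ 2 + (y 3) ^ 4)
    (hQ : Q = (y 0) ^ 2 * (y 3) ^ 4 + 4 * (y 1) ^ 2 * (y 3) ^ 4 + (y 2) ^ 2 * (y 3) ^ 4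
      - 9 * (y 2) ^ 4 * (y 3) ^ 2 - 8 * (y 0) ^ 2 * (y 2) ^ 2 * (y 3) ^ 2
      + 24 * (y 1) ^ 4 * (y 3) ^ 2 - 8 * (y 0) ^ 2 * (y 1) ^ 2 * (y 3) ^ 2
      - 12 * (y 1) ^ 2 * (y 2) ^ 2 * (y 3) ^ 2 + (y 0) ^ 4 * (y 3) ^ 2
      + (y 0) ^ 4 * (y 1) ^ 2 - 9 * (y 0) ^ 2 * (y 1) ^ 4 + 20 * (y 1) ^ 6
      - 21 * (y 1) ^ 4 * (y 2) ^ 2 + 4 * (y 0) ^ 4 * (y 2) ^ 2 + 20 * (y 2) ^ 6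
      - 21 * (y 1) ^ 2 * (y 2) ^ 4 + 24 * (y 0) ^ 2 * (y 2) ^ 4
      - 12 * (y 0) ^ 2 * (y 1) ^ 2 * (y 2) ^ 2)
    (hR : R = -2 * (y 0) ^ 2 + 5 * (y 1) ^ 2 - 4 * (y 2) ^ 2 + (y 3) ^ 2)
    (hD : D = 6 * (y 3) ^ 2 - 6 * (y 0) ^ 2 + 18 * (y 1) ^ 2 - 18 * (y 2) ^ 2)
    (ha : a = -6 * R) :
    ∀ i : Fin 4,
      (a + (i : ℕ) * D) ^ 3 - 36 * P * (a + (i : ℕ) * D) + 216 * Q =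
        36 * (y i) ^ 2 * D ^ 2 := by
  subst hP hQ hR hD ha
  intro i
  fin_cases i <;> simp only [show ((0:Fin 4))=0 from rfl, Fin.isValue, show ((⟨1,by norm_num⟩:Fin 4))=1 from rfl, show ((⟨2,by norm_num⟩:Fin 4))=2 from rfl, show ((⟨3,by norm_num⟩:Fin 4))=3 from rfl] <;> norm_num <;> ring
end

section
/- For all y₀, y₁, y₂, y₃ ∈ ℚ, with P, Q, R, D, a defined by P = y₀⁴ − 9y₀²y₁² + 6y₀²y₂² + y₀²y₃² + 21y₁⁴ − 39y₁²y₂² + 6y₁²y₃² + 21y₂⁴ − 9y₂²y₃² + y₃⁴, Q = y₀²y₃⁴ + 4y₁²y₃⁴ + y₂²y₃⁴ − 9y₂⁴y₃² − 8y₀²y₂²y₃² + 24y₁⁴y₃² − 8y₀²y₁²y₃² − 12y₁²y₂²y₃² + y₀⁴y₃² + y₀⁴y₁² − 9y₀²y₁⁴ + 20y₁⁶ − 21y₁⁴y₂² + 4y₀⁴y₂² + 20y₂⁶ − 21y₁²y₂⁴ + 24y₀²y₁²y₂²·(−1) + 24y₀²y₂⁴ [i.e., Q as in Bremner's parametrization],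 R = −2y₀² + 5y₁² − 4y₂² + y₃², D = 6y₃² − 6y₀² + 18y₁² − 18y₂², a = −6R, the following two polynomial identities hold: (a + 4D)³ − 36P·(a + 4D) + 216Q = 36·D²·(4y₃² + 4y₁² − y₀² − 6y₂²), and (a + 5D)³ − 36P·(a + 5D) + 216Q = 36·D²·(−4y₀² − 20y₂² + 15y₁² + 10y₃²). Consequently the fifth and sixth terms a + 4D and a + 5D of the x-arithmetic progression carry rational points on Y² = X³ − 36P·X + 216Q exactly when 4y₃² + 4y₁² − y₀² − 6y₂² (respectively −4y₀² − 20y₂² + 15y₁² + 10y₃²) is a rational square. -/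
/-- Extension of Bremner's rescaled parametrization to the fifth and sixth terms: with the
polynomials `P`, `Q`, `R`, `D`, `a = −6R` as in the parametrization, one has the identities
`(a + 4D)³ − 36P·(a + 4D) + 216Q = 36·D²·(4y₃² + 4y₁² − y₀² − 6y₂²)` and
`(a + 5D)³ − 36P·(a + 5D) + 216Q = 36·D²·(−4y₀² − 20y₂² + 15y₁² + 10y₃²)`.  Consequently
`a + 4D` and `a + 5D` carry rational points on `Y² = X³ − 36P·X + 216Q` exactly when the
corresponding quadratic forms are rational squares. -/
theorem bremner_parametrization_fifth_and_sixth_terms (y : Fin 4 → ℚ) (P Q R D a : ℚ)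
    (hP : P = (y 0) ^ 4 - 9 * (y 0) ^ 2 * (y 1) ^ 2 + 6 * (y 0) ^ 2 * (y 2) ^ 2
      + (y 0) ^ 2 * (y 3) ^ 2 + 21 * (y 1) ^ 4 - 39 * (y 1) ^ 2 * (y 2) ^ 2
      + 6 * (y 1) ^ 2 * (y 3) ^ 2 + 21 * (y 2) ^ 4 - 9 * (y 2) ^ 2 * (y 3) ^ 2 + (y 3) ^ 4)
    (hQ : Q = (y 0) ^ 2 * (y 3) ^ 4 + 4 * (y 1) ^ 2 * (y 3) ^ 4 + (y 2) ^ 2 * (y 3) ^ 4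
      - 9 * (y 2) ^ 4 * (y 3) ^ 2 - 8 * (y 0) ^ 2 * (y 2) ^ 2 * (y 3) ^ 2
      + 24 * (y 1) ^ 4 * (y 3) ^ 2 - 8 * (y 0) ^ 2 * (y 1) ^ 2 * (y 3) ^ 2
      - 12 * (y 1) ^ 2 * (y 2) ^ 2 * (y 3) ^ 2 + (y 0) ^ 4 * (y 3) ^ 2
      + (y 0) ^ 4 * (y 1) ^ 2 - 9 * (y 0) ^ 2 * (y 1) ^ 4 + 20 * (y 1) ^ 6
      - 21 * (y 1) ^ 4 * (y 2) ^ 2 + 4 * (y 0) ^ 4 * (y 2) ^ 2 + 20 * (y 2) ^ 6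
      - 21 * (y 1) ^ 2 * (y 2) ^ 4 + 24 * (y 0) ^ 2 * (y 2) ^ 4
      - 12 * (y 0) ^ 2 * (y 1) ^ 2 * (y 2) ^ 2)
    (hR : R = -2 * (y 0) ^ 2 + 5 * (y 1) ^ 2 - 4 * (y 2) ^ 2 + (y 3) ^ 2)
    (hD : D = 6 * (y 3) ^ 2 - 6 * (y 0) ^ 2 + 18 * (y 1) ^ 2 - 18 * (y 2) ^ 2)
    (ha : a = -6 * R) :
    (a + 4 * D) ^ 3 - 36 * P * (a + 4 * D) + 216 * Q =
        36 * D ^ 2 * (4 * (y 3) ^ 2 + 4 * (y 1) ^ 2 - (y 0) ^ 2 - 6 * (y 2) ^ 2) ∧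
    (a + 5 * D) ^ 3 - 36 * P * (a + 5 * D) + 216 * Q =
        36 * D ^ 2 * (-4 * (y 0) ^ 2 - 20 * (y 2) ^ 2 + 15 * (y 1) ^ 2 + 10 * (y 3) ^ 2) := by
  subst hP hQ hR hD ha; constructor <;> ring
end

section
/- For every t ∈ ℚ and every i ∈ {0, 1, 2, 3, 4, 5}, the point ( (1536 + 48i)·t²/361 , (98208 − 576·τ(i))·t³/6859 ), where τ is the permutation of {0,…,5} with (τ(0),…,τ(5)) = (1, 2, 0, 3, 4, 5), lies on the curve Y² − (120t/19)XY = X³ − (3600t²/361)X² − (7840512t⁴/130321)X + (8449090560t⁶/47045881). In particular, for every t ≠ 0 these six points form a simultaneous arithmetic progression of length 6: the x-coordinates form an arithmetic progression with common difference 48t²/361, and the y-coordinates equal b + τ(i)·e with b = 98208t³/6859 and e = −576t³/6859. -/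
/-- For every `t ∈ ℚ` and every `i ∈ {0, …, 5}`, with `τ` the permutation
`(τ(0), …, τ(5)) = (1, 2, 0, 3, 4, 5)`, the point
`((1536 + 48i)·t²/361, (98208 − 576·τ(i))·t³/6859)` lies on the curve
`Y² − (120t/19)XY = X³ − (3600t²/361)X² − (7840512t⁴/130321)X + (8449090560t⁶/47045881)`.
In particular, for every `t ≠ 0` these six points form a simultaneous arithmetic
progression of length 6, with `x`-difference `48t²/361 ≠ 0`, `b = 98208t³/6859` and
`e = −576t³/6859`. -/
theorem family_of_saps_of_length_six :
    let τ : Fin 6 → Fin 6 := ![1, 2, 0, 3, 4, 5]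
    Function.Bijective τ ∧
    (∀ t : ℚ, ∀ i : Fin 6,
      let xi : ℚ := (1536 + 48 * (i : ℕ)) * t ^ 2 / 361
      let yi : ℚ := (98208 - 576 * ((τ i : ℕ) : ℚ)) * t ^ 3 / 6859
      yi ^ 2 - 120 * t / 19 * xi * yi =
        xi ^ 3 - 3600 * t ^ 2 / 361 * xi ^ 2 - 7840512 * t ^ 4 / 130321 * xi
          + 8449090560 * t ^ 6 / 47045881) ∧
    (∀ t : ℚ, ∀ i : Fin 6,
      (1536 + 48 * (i : ℕ)) * t ^ 2 / 361 = 1536 * t ^ 2 / 361 + (i : ℕ) * (48 * t ^ 2 / 361) ∧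
      (98208 - 576 * ((τ i : ℕ) : ℚ)) * t ^ 3 / 6859 =
        98208 * t ^ 3 / 6859 + ((τ i : ℕ) : ℚ) * (-576 * t ^ 3 / 6859)) ∧
    (∀ t : ℚ, t ≠ 0 → 48 * t ^ 2 / 361 ≠ 0) := by
  refine ⟨?_, ?_, ?_, ?_⟩
  · decide
  · intro t i
    fin_cases i <;> norm_num [show ((3:Fin 6):ℕ)=3 from rfl, show ((4:Fin 6):ℕ)=4 from rfl, show ((5:Fin 6):ℕ)=5 from rfl] <;> ring
  · intro t i
    fin_cases i <;> constructor <;> simp <;> ring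
  · intro t ht
    positivity
end

section
/- The five points (−4, 44/3), (0, 20), (4, 52/3), (8, 68/3), (12, 12) all lie on the curve Y² − (20/3)XY = X³ − (100/9)X² − 112X + 400 over ℚ. Their x-coordinates form an arithmetic progression with common difference 4, and for the permutation σ = (1,3,2,4,0) of {0,…,4} (σ(0)=1, σ(1)=3, σ(2)=2, σ(3)=4, σ(4)=0) the y-coordinates satisfy y_k = 12 + σ(k)·(8/3) for all k. Hence this curve has a simultaneous arithmetic progression of length 5. -/
/-- The five points `(−4, 44/3)`, `(0, 20)`, `(4, 52/3)`, `(8, 68/3)`, `(12, 12)` lie on the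
curve `Y² − (20/3)XY = X³ − (100/9)X² − 112X + 400` over `ℚ`; their `x`-coordinates form an
arithmetic progression with common difference `4`, and for the permutation
`σ = (1,3,2,4,0)` of `{0, …, 4}` the `y`-coordinates satisfy `y_k = 12 + σ(k)·(8/3)`.
Hence this curve has a simultaneous arithmetic progression of length 5. -/
theorem sap_of_length_five_second_example :
    let x : Fin 5 → ℚ := ![-4, 0, 4, 8, 12]
    let y : Fin 5 → ℚ := ![44/3, 20, 52/3, 68/3, 12]
    let σ : Fin 5 → Fin 5 := ![1, 3, 2, 4, 0]
    Function.Bijective σ ∧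
    (∀ k : Fin 5,
      (y k) ^ 2 - 20/3 * (x k) * (y k) =
        (x k) ^ 3 - 100/9 * (x k) ^ 2 - 112 * (x k) + 400) ∧
    (∀ k : Fin 5, x k = -4 + (k : ℕ) * 4) ∧ (4 : ℚ) ≠ 0 ∧
    (∀ k : Fin 5, y k = 12 + ((σ k : ℕ) : ℚ) * (8/3)) := by
  refine ⟨⟨?_, ?_⟩, ?_, ?_, by norm_num, ?_⟩
  · decide
  · decide
  all_goals intro k; fin_cases k <;> norm_num [show ((3:Fin 5):ℕ)=3 from rfl, show ((4:Fin 5):ℕ)=4 from rfl]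
end

section
/- Let x_k = −4 + 4k for k = 0,…,5 and (y₀,…,y₅) = (28, 20, 4, 4, 28, 52), so that (x_k, ±y_k) are the rational points of Y² = X³ − 112X + 400 with these x-coordinates. Then for every choice of signs ε₀,…,ε₅ ∈ {1, −1}, every permutation σ of {0,…,5}, and all r, b, e ∈ ℚ, the equations ε_k·y_k − r·x_k = b + σ(k)·e (k = 0,…,5) cannot all hold. Consequently, no shear Y' = Y − rX (followed by a translation of Y) turns the x-arithmetic progression −4, 0, 4, 8, 12, 16 on Y² = X³ − 112X + 400 into a simultaneous arithmetic progression of length 6. -/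
/-!
Along an arithmetic progression of `x`-coordinates, second differences annihilate `b + r x`:
the equations give `Δ²(εy)_k = e · Δ²σ_k` for `k = 0, …, 3`. Since
`Δ²(εy)_0 = 4ε₂ - 40ε₁ + 28ε₀` never vanishes, `e ≠ 0` and `Δ²σ_0 ≠ 0`, so the integer
vectors `Δ²(εy)` and `Δ²σ` are proportional. A search over the `2⁶` sign choices and the `6!`
permutations shows that they never are.
-/

section secondDiff

variable {R : Type*} {n : ℕ}

def secondDiff [Ring R] (f : Fin (n + 2) → R) (k : Fin n) : R :=
  f k.succ.succ - 2 * f k.succ.castSucc + f k.castSucc.castSucc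

theorem cast_secondDiff [Ring R] (f : Fin (n + 2) → ℤ) (k : Fin n) :
    ((secondDiff f k : ℤ) : R) = secondDiff (fun i => (f i : R)) k := by
  simp [secondDiff]

theorem secondDiff_eq_mul_of_sub_mul_eq [CommRing R] {f x d : Fin (n + 2) → R} {a h r b e : R}
    (hx : ∀ i, x i = a + h * (i : ℕ)) (hf : ∀ i, f i - r * x i = b + d i * e) (k : Fin n) :
    secondDiff f k = secondDiff d k * e := by
  have h₀ := hf k.castSucc.castSucc
  have h₁ := hf k.succ.castSucc
  have h₂ := hf k.succ.succ
  simp only [hx, Fin.val_succ, Fin.val_castSucc, Nat.cast_add, Nat.cast_one] at h₀ h₁ h₂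
  unfold secondDiff
  linear_combination h₂ - 2 * h₁ + h₀

end secondDiff

theorem secondDiff_sign_mul_ne_zero :
    ∀ ε : Fin 6 → ℤˣ, secondDiff (fun i => (ε i : ℤ) * ![28, 20, 4, 4, 28, 52] i) 0 ≠ 0 := by
  decide

theorem secondDiff_sign_mul_not_proportional :
    ∀ ε : Fin 6 → ℤˣ, ∀ σ : Equiv.Perm (Fin 6),
      secondDiff (fun i => ((σ i : ℕ) : ℤ)) 0 ≠ 0 →
      ¬ ∀ k, secondDiff (fun i => (ε i : ℤ) * ![28, 20, 4, 4, 28, 52] i) k *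
            secondDiff (fun i => ((σ i : ℕ) : ℤ)) 0 =
          secondDiff (fun i => (ε i : ℤ) * ![28, 20, 4, 4, 28, 52] i) 0 *
            secondDiff (fun i => ((σ i : ℕ) : ℤ)) k := by
  decide +kernel

theorem exists_units_int_eq_of_eq_one_or_eq_neg_one {R ι : Type*} [Ring R] {ε : ι → R}
    (h : ∀ k, ε k = 1 ∨ ε k = -1) : ∃ s : ι → ℤˣ, ∀ k, ε k = ((s k : ℤ) : R) := by
  choose s hs using fun k => show ∃ u : ℤˣ, ε k = ((u : ℤ) : R) from
    (h k).elim (fun h₁ => ⟨1, by simp [h₁]⟩) (fun h₁ => ⟨-1, by simp [h₁]⟩)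
  exact ⟨s, hs⟩

/-- Let `x_k = −4 + 4k` for `k = 0, …, 5` and `(y₀, …, y₅) = (28, 20, 4, 4, 28, 52)`, so
that `(x_k, ±y_k)` are the rational points of `Y² = X³ − 112X + 400` with these
`x`-coordinates.  For every choice of signs `ε_k ∈ {1, −1}`, every permutation `σ` of
`{0, …, 5}`, and all `r, b, e ∈ ℚ`, the equations `ε_k·y_k − r·x_k = b + σ(k)·e` cannot all
hold: no shear `Y' = Y − rX` (followed by a translation of `Y`) turns this `x`-arithmetic
progression into a simultaneous arithmetic progression of length 6. -/
theorem no_sap_of_length_six_on_support :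
    let x : Fin 6 → ℚ := fun k => -4 + 4 * (k : ℕ)
    let y : Fin 6 → ℚ := ![28, 20, 4, 4, 28, 52]
    ∀ ε : Fin 6 → ℚ, (∀ k : Fin 6, ε k = 1 ∨ ε k = -1) →
      ∀ σ : Equiv.Perm (Fin 6), ∀ r b e : ℚ,
        ¬ ∀ k : Fin 6, ε k * y k - r * x k = b + ((σ k : ℕ) : ℚ) * e := by
  intro x y ε hε σ r b e H
  obtain ⟨s, hs⟩ := exists_units_int_eq_of_eq_one_or_eq_neg_one hε
  set u : Fin 6 → ℤ := fun i => s i * ![28, 20, 4, 4, 28, 52] i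
  set d : Fin 6 → ℤ := fun i => ((σ i : ℕ) : ℤ)
  have H' : ∀ i, ((u i : ℤ) : ℚ) - r * x i = b + ((d i : ℤ) : ℚ) * e := by
    intro i
    rw [Int.cast_natCast, ← H i, hs i]
    fin_cases i <;> simp [u, y]
  have hΔ : ∀ k, ((secondDiff u k : ℤ) : ℚ) = ((secondDiff d k : ℤ) : ℚ) * e := by
    intro k
    simpa only [cast_secondDiff] using secondDiff_eq_mul_of_sub_mul_eq (fun _ => rfl) H' k
  have hu₀ : ((secondDiff u 0 : ℤ) : ℚ) ≠ 0 := by exact_mod_cast secondDiff_sign_mul_ne_zero s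
  refine secondDiff_sign_mul_not_proportional s σ ?_ fun k => ?_
  · exact_mod_cast left_ne_zero_of_mul (hΔ 0 ▸ hu₀)
  · have hcross : ((secondDiff u k : ℤ) : ℚ) * (secondDiff d 0 : ℤ) =
        ((secondDiff u 0 : ℤ) : ℚ) * (secondDiff d k : ℤ) := by
      rw [hΔ k, hΔ 0]; ring
    exact_mod_cast hcross
end

section
/- For the permutation σ of {0,…,5} with (σ(0),…,σ(5)) = (5, 3, 4, 2, 0, 1), the six points P_i = (−324 + 144i, 9288 − 3456·σ(i)), i = 0,…,5, all lie on the curve Y² − 60XY + 900X² = X³ − 86832X + 8864640 over ℚ. Their x-coordinates form an arithmetic progression with common difference 144 and their y-coordinates are of the form 9288 + σ(i)·(−3456), so this curve has a simultaneous arithmetic progression of length 6. -/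
/-- For the permutation `σ` of `{0, …, 5}` with `(σ(0), …, σ(5)) = (5, 3, 4, 2, 0, 1)`, the
six points `P_i = (−324 + 144i, 9288 − 3456·σ(i))`, `i = 0, …, 5`, lie on the curve
`Y² − 60XY + 900X² = X³ − 86832X + 8864640` over `ℚ`.  Their `x`-coordinates form an
arithmetic progression with common difference `144` and their `y`-coordinates are
`9288 + σ(i)·(−3456)`, so this curve has a simultaneous arithmetic progression of
length 6. -/
theorem sap_of_length_six_second_example :
    let σ : Fin 6 → Fin 6 := ![5, 3, 4, 2, 0, 1]
    Function.Bijective σ ∧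
    (∀ i : Fin 6,
      let xi : ℚ := -324 + 144 * (i : ℕ)
      let yi : ℚ := 9288 - 3456 * ((σ i : ℕ) : ℚ)
      yi ^ 2 - 60 * xi * yi + 900 * xi ^ 2 = xi ^ 3 - 86832 * xi + 8864640) ∧
    (144 : ℚ) ≠ 0 ∧
    (∀ i : Fin 6, (9288 : ℚ) - 3456 * ((σ i : ℕ) : ℚ) = 9288 + ((σ i : ℕ) : ℚ) * (-3456)) := by
  refine ⟨?_, ?_, by norm_num, fun i => by ring⟩
  · decide
  · intro i; fin_cases i <;> norm_num [show ((5:Fin 6):ℕ)=5 from rfl, show ((4:Fin 6):ℕ)=4 from rfl, show ((3:Fin 6):ℕ)=3 from rfl, show ((2:Fin 6):ℕ)=2 from rfl]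
end
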